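/- arXiv:2509.25150 — 8 statements merged into one kernel-verified Lean document; each statement's English description precedes it below -/
import Mathlib

section
/- Every house allocation instance with arbitrary nonnegative agent weights and preference lists that may contain ties admits a popular winning set of cardinality 2: there exist matchings M₁ and M₂ such that for every matching M', φ({M₁, M₂}, M') ≥ φ(M', {M₁, M₂}). -/
open scoped Classical

/-- `M` is a matching in the house allocation instance with adjacency `E`. -/
def HA.IsMatching {ι κ : Type*} (E M : Finset (ι × κ)) : Prop :=
  M ⊆ E ∧ (∀ p ∈ M, ∀ q ∈ M, p.1 = q.1 → p = q) ∧ (∀ p ∈ M, ∀ q ∈ M, p.2 = q.2 → p = q)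

/-- Agent `i` strictly prefers matching `M` over matching `M'`. -/
def HA.Prefers {ι κ : Type*} (r : ι → κ → ℕ) (M M' : Finset (ι × κ)) (i : ι) : Prop :=
  ∃ p ∈ M, p.1 = i ∧ ∀ q ∈ M', q.1 = i → r i p.2 < r i q.2

/-- `φ(𝓜, M')`: total weight of agents strictly preferring some matching of `𝓜` over `M'`. -/
noncomputable def HA.phiSet {ι κ : Type*} [Fintype ι] (w : ι → ℝ) (r : ι → κ → ℕ)
    (𝓜 : Set (Finset (ι × κ))) (M' : Finset (ι × κ)) : ℝ :=
  ∑ i, if ∃ M ∈ 𝓜, HA.Prefers r M M' i then w i else 0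

/-- `φ(M', 𝓜)`: total weight of agents strictly preferring `M'` over every matching of `𝓜`. -/
noncomputable def HA.phiSet' {ι κ : Type*} [Fintype ι] (w : ι → ℝ) (r : ι → κ → ℕ)
    (M' : Finset (ι × κ)) (𝓜 : Set (Finset (ι × κ))) : ℝ :=
  ∑ i, if ∀ M ∈ 𝓜, HA.Prefers r M' M i then w i else 0

namespace HAProofAux

set_option linter.unusedSectionVars false

variable {ι κ : Type*} [Fintype ι] [Fintype κ]

/-! ### Feasibility of bound profiles -/

noncomputable def allowed (E : Finset (ι × κ)) (r : ι → κ → ℕ) (b : ι → ℕ∞) (i : ι) :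
    Finset κ :=
  Finset.univ.filter fun j => (i, j) ∈ E ∧ (r i j : ℕ∞) ≤ b i

def Feas (E : Finset (ι × κ)) (r : ι → κ → ℕ) (b : ι → ℕ∞) : Prop :=
  ∀ S : Finset ι, (∀ i ∈ S, b i ≠ ⊤) → S.card ≤ 2 * (S.biUnion (allowed E r b)).card

lemma allowed_congr {E : Finset (ι × κ)} {r : ι → κ → ℕ} {b b' : ι → ℕ∞} {i : ι}
    (h : b i = b' i) : allowed E r b i = allowed E r b' i := by
  simp [allowed, h]

lemma feas_top (E : Finset (ι × κ)) (r : ι → κ → ℕ) : Feas E r (fun _ => ⊤) := by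
  intro S hS
  have : S = ∅ := by
    by_contra h
    obtain ⟨i, hi⟩ := Finset.nonempty_of_ne_empty h
    exact hS i hi rfl
  simp [this]

/-! ### The greedy bound profile -/

noncomputable def cand (E : Finset (ι × κ)) (r : ι → κ → ℕ) (i : ι) : Finset ℕ∞ :=
  (E.filter fun p => p.1 = i).image fun p => ((r i p.2 : ℕ∞))

noncomputable def pick (E : Finset (ι × κ)) (r : ι → κ → ℕ) (b : ι → ℕ∞) (i : ι) : ℕ∞ :=
  if h : ((cand E r i).filter fun v => Feas E r (Function.update b i v)).Nonempty then
    ((cand E r i).filter fun v => Feas E r (Function.update b i v)).min' h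
  else ⊤

noncomputable def prof (E : Finset (ι × κ)) (r : ι → κ → ℕ)
    (ord : ι ≃ Fin (Fintype.card ι)) : ℕ → ι → ℕ∞
  | 0 => fun _ => ⊤
  | (k+1) =>
    if h : k < Fintype.card ι then
      Function.update (prof E r ord k) (ord.symm ⟨k, h⟩)
        (pick E r (prof E r ord k) (ord.symm ⟨k, h⟩))
    else prof E r ord k

noncomputable def beta (E : Finset (ι × κ)) (r : ι → κ → ℕ)
    (ord : ι ≃ Fin (Fintype.card ι)) : ι → ℕ∞ :=
  prof E r ord (Fintype.card ι)

variable {E : Finset (ι × κ)} {r : ι → κ → ℕ} {ord : ι ≃ Fin (Fintype.card ι)}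

lemma prof_eq_top {k : ℕ} {i : ι} (h : k ≤ (ord i : ℕ)) : prof E r ord k i = ⊤ := by
  induction k with
  | zero => rfl
  | succ k ih =>
    rw [prof]
    have hk : k < Fintype.card ι := lt_of_lt_of_le (Nat.lt_of_succ_le h) (ord i).2.le
    rw [dif_pos hk]
    have hne : ord.symm ⟨k, hk⟩ ≠ i := by
      intro he
      apply absurd h
      simp only [not_le]
      have : ord i = ⟨k, hk⟩ := by rw [← he]; simp
      rw [this]
      exact Nat.lt_succ_self k
    rw [Function.update_of_ne (Ne.symm hne)]
    exact ih (le_of_lt (Nat.lt_of_succ_le h))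

lemma prof_stable {k k' : ℕ} {i : ι} (hk : (ord i : ℕ) < k) (hkk : k ≤ k') :
    prof E r ord k' i = prof E r ord k i := by
  induction k' with
  | zero => omega
  | succ k' ih =>
    rcases Nat.lt_or_ge k' k with h | h
    · have : k = k' + 1 := by omega
      rw [this]
    · rw [prof]
      split
      · rename_i hlt
        have hne : ord.symm ⟨k', hlt⟩ ≠ i := by
          intro he
          have : ord i = ⟨k', hlt⟩ := by rw [← he]; simp
          have : (ord i : ℕ) = k' := by rw [this]
          omega
        rw [Function.update_of_ne (Ne.symm hne)]
        exact ih (by omega)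
      · exact ih (by omega)

lemma beta_eq_pick (i : ι) :
    beta E r ord i = pick E r (prof E r ord (ord i)) i := by
  have h1 : beta E r ord i = prof E r ord ((ord i : ℕ) + 1) i :=
    prof_stable (Nat.lt_succ_self _) (Nat.succ_le_of_lt (ord i).2)
  rw [h1, prof, dif_pos (ord i).2]
  have : ord.symm ⟨(ord i : ℕ), (ord i).2⟩ = i := by simp
  rw [this, Function.update_self]

lemma feas_prof : ∀ k, Feas E r (prof E r ord k) := by
  intro k
  induction k with
  | zero => exact feas_top E r
  | succ k ih =>
    rw [prof]
    split
    · rename_i hlt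
      set i := ord.symm ⟨k, hlt⟩
      rw [pick]
      split
      · rename_i hne
        have := Finset.min'_mem _ hne
        rw [Finset.mem_filter] at this
        exact this.2
      · have hik : (ord i : ℕ) = k := by simp [i]
        have : prof E r ord k i = ⊤ := prof_eq_top (le_of_eq hik.symm)
        rw [← this, Function.update_eq_self]
        exact ih
    · exact ih

lemma feas_beta : Feas E r (beta E r ord) := feas_prof _

lemma beta_min {i : ι} {v : ℕ∞} (hv : v ∈ cand E r i) (hlt : v < beta E r ord i) :
    ¬ Feas E r (Function.update (prof E r ord (ord i)) i v) := by
  intro hF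
  have hp : v ∈ (cand E r i).filter fun u => Feas E r (Function.update (prof E r ord (ord i)) i u) :=
    Finset.mem_filter.mpr ⟨hv, hF⟩
  have hne : ((cand E r i).filter fun u => Feas E r (Function.update (prof E r ord (ord i)) i u)).Nonempty := ⟨v, hp⟩
  have : beta E r ord i ≤ v := by
    rw [beta_eq_pick, pick, dif_pos hne]
    exact Finset.min'_le _ _ hp
  exact absurd hlt (not_lt.mpr this)

lemma prof_ord_eq (i : ι) :
    prof E r ord (ord i) = fun k => if (ord k : ℕ) < (ord i : ℕ) then beta E r ord k else ⊤ := by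
  funext k
  by_cases h : (ord k : ℕ) < (ord i : ℕ)
  · rw [if_pos h]
    have h1 : prof E r ord (ord i) k = prof E r ord ((ord k : ℕ) + 1) k :=
      prof_stable (Nat.lt_succ_self _) (by omega)
    have h2 : beta E r ord k = prof E r ord ((ord k : ℕ) + 1) k :=
      prof_stable (Nat.lt_succ_self _) (Nat.succ_le_of_lt (ord k).2)
    rw [h1, ← h2]
  · rw [if_neg h]
    exact prof_eq_top (by omega)

/-! ### Hall realization -/

lemma exists_hall {b : ι → ℕ∞} (hF : Feas E r b) :
    ∃ f : {i : ι // b i ≠ ⊤} → κ × Bool, Function.Injective f ∧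
      ∀ x, (f x).1 ∈ allowed E r b x.1 := by
  have key : ∀ s : Finset {i : ι // b i ≠ ⊤},
      s.card ≤ (s.biUnion fun x => (allowed E r b x.1) ×ˢ (Finset.univ : Finset Bool)).card := by
    intro s
    have h1 : s.biUnion (fun x => (allowed E r b x.1) ×ˢ (Finset.univ : Finset Bool)) =
        ((s.image Subtype.val).biUnion (allowed E r b)) ×ˢ (Finset.univ : Finset Bool) := by
      ext ⟨j, c⟩
      simp [Finset.mem_biUnion, Finset.mem_product]
    rw [h1, Finset.card_product]
    have h2 : s.card = (s.image Subtype.val).card :=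
      (Finset.card_image_of_injective _ Subtype.val_injective).symm
    rw [h2]
    have h3 := hF (s.image Subtype.val) (by
      intro i hi
      simp only [Finset.mem_image] at hi
      obtain ⟨x, _, hx⟩ := hi
      rw [← hx]; exact x.2)
    calc (s.image Subtype.val).card
        ≤ 2 * ((s.image Subtype.val).biUnion (allowed E r b)).card := h3
      _ = ((s.image Subtype.val).biUnion (allowed E r b)).card *
            (Finset.univ : Finset Bool).card := by
          rw [Finset.card_univ, Fintype.card_bool]; ring
  obtain ⟨f, hinj, hmem⟩ := (Finset.all_card_le_biUnion_card_iff_exists_injective _).mp key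
  refine ⟨f, hinj, fun x => ?_⟩
  have := hmem x
  rw [Finset.mem_product] at this
  exact this.1

/-! ### Ranks in a matching -/

noncomputable def rho (r : ι → κ → ℕ) (M' : Finset (ι × κ)) (i : ι) : ℕ∞ :=
  (M'.filter fun p => p.1 = i).inf fun p => ((r i p.2 : ℕ∞))

lemma rho_eq (r : ι → κ → ℕ) {M' : Finset (ι × κ)} (hM' : HA.IsMatching E M') {p : ι × κ}
    (hp : p ∈ M') : rho r M' p.1 = (r p.1 p.2 : ℕ∞) := by
  have hfil : M'.filter (fun q => q.1 = p.1) = {p} := by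
    ext q
    simp only [Finset.mem_filter, Finset.mem_singleton]
    constructor
    · rintro ⟨hq, hq1⟩
      exact hM'.2.1 q hq p hp hq1
    · rintro rfl; exact ⟨hp, rfl⟩
  rw [rho, hfil, Finset.inf_singleton]

lemma rho_ne_top {M' : Finset (ι × κ)} {i : ι} (h : rho r M' i ≠ ⊤) :
    ∃ p ∈ M', p.1 = i := by
  by_contra hc
  push_neg at hc
  have : M'.filter (fun p => p.1 = i) = ∅ := by
    rw [Finset.filter_eq_empty_iff]
    exact fun {p} hp => hc p hp
  rw [rho, this] at h
  simp at h

/-! ### The two matchings from a Hall realization -/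

section Matchings

variable {b : ι → ℕ∞} (f : {i : ι // b i ≠ ⊤} → κ × Bool)

noncomputable def MB (c : Bool) : Finset (ι × κ) :=
  (Finset.univ.filter fun x : {i : ι // b i ≠ ⊤} => (f x).2 = c).image fun x => (x.1, (f x).1)

lemma mem_MB {c : Bool} {p : ι × κ} :
    p ∈ MB f c ↔ ∃ x, (f x).2 = c ∧ p = (x.1, (f x).1) := by
  simp only [MB, Finset.mem_image, Finset.mem_filter, Finset.mem_univ, true_and]
  constructor
  · rintro ⟨x, hx, rfl⟩; exact ⟨x, hx, rfl⟩
  · rintro ⟨x, hx, rfl⟩; exact ⟨x, hx, rfl⟩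

lemma isMatching_MB (hf : Function.Injective f)
    (hmem : ∀ x, ((x.1 : ι), (f x).1) ∈ E) (c : Bool) : HA.IsMatching E (MB f c) := by
  refine ⟨?_, ?_, ?_⟩
  · intro p hp
    rw [mem_MB] at hp
    obtain ⟨x, _, rfl⟩ := hp
    exact hmem x
  · intro p hp q hq h1
    rw [mem_MB] at hp hq
    obtain ⟨x, _, rfl⟩ := hp
    obtain ⟨y, _, rfl⟩ := hq
    have : x = y := Subtype.ext h1
    rw [this]
  · intro p hp q hq h2
    rw [mem_MB] at hp hq
    obtain ⟨x, hxc, rfl⟩ := hp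
    obtain ⟨y, hyc, rfl⟩ := hq
    have : f x = f y := Prod.ext h2 (hxc.trans hyc.symm)
    rw [hf this]

noncomputable def bstar (r : ι → κ → ℕ) (b : ι → ℕ∞) (f : {i : ι // b i ≠ ⊤} → κ × Bool)
    (i : ι) : ℕ∞ :=
  if h : b i ≠ ⊤ then ((r i (f ⟨i, h⟩).1 : ℕ∞)) else ⊤

lemma prefers_pair_iff {M' : Finset (ι × κ)} (hM' : HA.IsMatching E M') (i : ι) :
    (∃ M ∈ ({MB f false, MB f true} : Set (Finset (ι × κ))), HA.Prefers r M M' i) ↔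
      bstar r b f i < rho r M' i := by
  constructor
  · rintro ⟨M, hM, p, hp, hp1, hlt⟩
    have hp' : ∃ x, p = ((x.1 : ι), (f x).1) := by
      simp only [Set.mem_insert_iff, Set.mem_singleton_iff] at hM
      rcases hM with rfl | rfl <;>
        · obtain ⟨x, _, rfl⟩ := (mem_MB f).mp hp; exact ⟨x, rfl⟩
    obtain ⟨x, rfl⟩ := hp'
    simp only at hp1
    have hbi : b i ≠ ⊤ := by rw [← hp1]; exact x.2
    have hx : x = ⟨i, hbi⟩ := Subtype.ext hp1
    have hbs : bstar r b f i = ((r i (f x).1 : ℕ∞)) := by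
      rw [bstar, dif_pos hbi, hx]
    rw [hbs]
    rcases eq_or_ne (rho r M' i) ⊤ with htop | hne
    · rw [htop]; exact WithTop.coe_lt_top _
    · obtain ⟨q, hq, hq1⟩ := rho_ne_top hne
      have : rho r M' i = (r i q.2 : ℕ∞) := by
        have := rho_eq r hM' hq; rw [hq1] at this; exact this
      rw [this, Nat.cast_lt]
      have := hlt q hq hq1
      rw [← hp1] at this ⊢
      exact this
  · intro hlt
    have hbi : b i ≠ ⊤ := by
      intro h
      rw [bstar, dif_neg (by simp [h])] at hlt
      exact absurd hlt (by simp)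
    set x : {i : ι // b i ≠ ⊤} := ⟨i, hbi⟩ with hxdef
    have hbs : bstar r b f i = ((r i (f x).1 : ℕ∞)) := by rw [bstar, dif_pos hbi]
    refine ⟨MB f (f x).2, by rcases hc : (f x).2 with _ | _ <;> simp, (x.1, (f x).1), ?_, rfl, ?_⟩
    · rw [mem_MB]; exact ⟨x, rfl, rfl⟩
    · intro q hq hq1
      have hrho : rho r M' i = (r i q.2 : ℕ∞) := by
        have := rho_eq r hM' hq; rw [hq1] at this; exact this
      rw [hbs, hrho, Nat.cast_lt] at hlt
      exact hlt

lemma prefers_over_pair_iff {M' : Finset (ι × κ)} (hM' : HA.IsMatching E M') (i : ι) :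
    (∀ M ∈ ({MB f false, MB f true} : Set (Finset (ι × κ))), HA.Prefers r M' M i) ↔
      rho r M' i < bstar r b f i := by
  constructor
  · intro h
    obtain ⟨p, hp, hp1, _⟩ := h (MB f false) (by simp)
    have hrho : rho r M' i = (r i p.2 : ℕ∞) := by
      have := rho_eq r hM' hp; rw [hp1] at this; exact this
    by_cases hbi : b i ≠ ⊤
    · set x : {i : ι // b i ≠ ⊤} := ⟨i, hbi⟩
      have hq : (x.1, (f x).1) ∈ MB f (f x).2 := by rw [mem_MB]; exact ⟨x, rfl, rfl⟩
      obtain ⟨p', hp', hp'1, hlt'⟩ := h (MB f (f x).2)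
        (by rcases hc : (f x).2 with _ | _ <;> simp)
      have := hlt' (x.1, (f x).1) hq rfl
      have hrho' : rho r M' i = (r i p'.2 : ℕ∞) := by
        have := rho_eq r hM' hp'; rw [hp'1] at this; exact this
      rw [bstar, dif_pos hbi, hrho']
      rw [Nat.cast_lt]
      exact this
    · push_neg at hbi
      rw [bstar, dif_neg (by simp [hbi]), hrho]
      exact WithTop.coe_lt_top _
  · intro hlt M hM
    have hne : rho r M' i ≠ ⊤ := ne_top_of_lt hlt
    obtain ⟨p, hp, hp1⟩ := rho_ne_top hne
    refine ⟨p, hp, hp1, ?_⟩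
    intro q hq hq1
    have hq' : ∃ x : {i : ι // b i ≠ ⊤}, q = ((x.1 : ι), (f x).1) := by
      simp only [Set.mem_insert_iff, Set.mem_singleton_iff] at hM
      rcases hM with rfl | rfl <;>
        · obtain ⟨x, _, rfl⟩ := (mem_MB f).mp hq; exact ⟨x, rfl⟩
    obtain ⟨x, rfl⟩ := hq'
    simp only at hq1
    have hbi : b i ≠ ⊤ := by rw [← hq1]; exact x.2
    have hx : x = ⟨i, hbi⟩ := Subtype.ext hq1
    have hbs : bstar r b f i = ((r i (f x).1 : ℕ∞)) := by rw [bstar, dif_pos hbi, hx]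
    have hrho : rho r M' i = (r i p.2 : ℕ∞) := by
      have := rho_eq r hM' hp; rw [hp1] at this; exact this
    rw [hrho, hbs, Nat.cast_lt] at hlt
    simpa using hlt

end Matchings

/-! ### Sum comparison from threshold cardinality comparison -/

lemma sum_le_of_card_filter_le (w : ι → ℝ) (hw : ∀ i, 0 ≤ w i) (B G : Finset ι)
    (hcard : ∀ t : ℝ, (B.filter fun i => t ≤ w i).card ≤ (G.filter fun i => t ≤ w i).card) :
    ∑ i ∈ B, w i ≤ ∑ i ∈ G, w i := by
  have key : ∀ s : Finset {x // x ∈ B},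
      s.card ≤ (s.biUnion fun x => G.filter fun g => w x.1 ≤ w g).card := by
    intro s
    rcases s.eq_empty_or_nonempty with rfl | hs
    · simp
    · have hne : (s.image fun x => w x.1).Nonempty := hs.image _
      set t₀ := (s.image fun x => w x.1).min' hne with ht₀
      obtain ⟨x₀, hx₀s, hx₀⟩ := Finset.mem_image.mp ((s.image fun x => w x.1).min'_mem hne)
      have hsubG : G.filter (fun g => t₀ ≤ w g) ⊆
          s.biUnion fun x => G.filter fun g => w x.1 ≤ w g := by
        intro g hg
        rw [Finset.mem_filter] at hg
        rw [Finset.mem_biUnion]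
        exact ⟨x₀, hx₀s, Finset.mem_filter.mpr ⟨hg.1, by rw [hx₀]; exact hg.2⟩⟩
      have h1 : s.card = (s.image Subtype.val).card :=
        (Finset.card_image_of_injective _ Subtype.val_injective).symm
      have h2 : s.image Subtype.val ⊆ B.filter fun i => t₀ ≤ w i := by
        intro i hi
        obtain ⟨x, hxs, rfl⟩ := Finset.mem_image.mp hi
        refine Finset.mem_filter.mpr ⟨x.2, ?_⟩
        exact Finset.min'_le _ _ (Finset.mem_image_of_mem _ hxs)
      calc s.card = (s.image Subtype.val).card := h1
        _ ≤ (B.filter fun i => t₀ ≤ w i).card := Finset.card_le_card h2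
        _ ≤ (G.filter fun i => t₀ ≤ w i).card := hcard t₀
        _ ≤ _ := Finset.card_le_card hsubG
  obtain ⟨f, hinj, hmem⟩ := (Finset.all_card_le_biUnion_card_iff_exists_injective _).mp key
  have hfG : ∀ x, f x ∈ G := fun x => (Finset.mem_filter.mp (hmem x)).1
  have hfw : ∀ x, w x.1 ≤ w (f x) := fun x => (Finset.mem_filter.mp (hmem x)).2
  calc ∑ i ∈ B, w i = ∑ x ∈ B.attach, w x.1 := (Finset.sum_attach B w).symm
    _ ≤ ∑ x ∈ B.attach, w (f x) := Finset.sum_le_sum fun x _ => hfw x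
    _ = ∑ g ∈ B.attach.image f, w g := by
        rw [Finset.sum_image]
        intro x _ y _ h
        exact hinj h
    _ ≤ ∑ g ∈ G, w g := by
        apply Finset.sum_le_sum_of_subset_of_nonneg
        · intro g hg
          obtain ⟨x, _, rfl⟩ := Finset.mem_image.mp hg
          exact hfG x
        · exact fun g _ _ => hw g

/-! ### The core counting lemma -/

lemma card_beaters_le_gainers
    (w : ι → ℝ) {M' : Finset (ι × κ)} (hM' : HA.IsMatching E M')
    (β : ι → ℕ∞) (αo : ι → Option κ) (t : ℝ)
    (hcap : ∀ h : κ, (Finset.univ.filter fun k => αo k = some h).card ≤ 2)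
    (hα : ∀ k, β k ≠ ⊤ → ∃ j ∈ allowed E r β k, αo k = some j)
    (V : ι → Finset ι) (H : ι → Finset κ)
    (hVmem : ∀ i, (rho r M' i < β i ∧ t ≤ w i) → ∀ k ∈ V i,
        β k ≠ ⊤ ∧ t ≤ w k ∧ allowed E r β k ⊆ H i)
    (hVcard : ∀ i, (rho r M' i < β i ∧ t ≤ w i) → (V i).card = 2 * (H i).card)
    (hhouse : ∀ i, (rho r M' i < β i ∧ t ≤ w i) → ∃ p ∈ M', p.1 = i ∧ p.2 ∈ H i) :
    (Finset.univ.filter fun i => rho r M' i < β i ∧ t ≤ w i).card ≤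
      (Finset.univ.filter fun i => β i < rho r M' i ∧ t ≤ w i).card := by
  set Bt := Finset.univ.filter fun i => rho r M' i < β i ∧ t ≤ w i with hBt
  set Gt := Finset.univ.filter fun i => β i < rho r M' i ∧ t ≤ w i with hGt
  have hBtP : ∀ i ∈ Bt, rho r M' i < β i ∧ t ≤ w i := by
    intro i hi; rw [hBt, Finset.mem_filter] at hi; exact hi.2
  set U := Bt.biUnion H with hU
  have full : ∀ i ∈ Bt, ∀ h ∈ H i,
      (Finset.univ.filter fun k => αo k = some h) ⊆ V i ∧
      (Finset.univ.filter fun k => αo k = some h).card = 2 := by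
    intro i hi h hh
    have hiP := hBtP i hi
    have hmaps : ∀ k ∈ V i, αo k ∈ (H i).image some := by
      intro k hk
      obtain ⟨hkt, _, hsub⟩ := hVmem i hiP k hk
      obtain ⟨j, hj, hje⟩ := hα k hkt
      rw [hje]
      exact Finset.mem_image_of_mem some (hsub hj)
    have hsum := Finset.card_eq_sum_card_fiberwise hmaps
    rw [Finset.sum_image (fun a _ b _ h => Option.some_injective κ h)] at hsum
    have hle2 : ∀ h' : κ, ((V i).filter fun k => αo k = some h').card ≤ 2 := by
      intro h'
      exact le_trans (Finset.card_le_card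
        (Finset.filter_subset_filter _ (Finset.subset_univ _))) (hcap h')
    have h2le : 2 ≤ ((V i).filter fun k => αo k = some h).card := by
      by_contra hlt
      push_neg at hlt
      have : (∑ h' ∈ H i, ((V i).filter fun k => αo k = some h').card) < ∑ h' ∈ H i, 2 :=
        Finset.sum_lt_sum (fun h' _ => hle2 h') ⟨h, hh, hlt⟩
      rw [← hsum, Finset.sum_const, smul_eq_mul, mul_comm] at this
      rw [hVcard i hiP] at this
      omega
    have hsub' : ((V i).filter fun k => αo k = some h) ⊆
        (Finset.univ.filter fun k => αo k = some h) :=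
      Finset.filter_subset_filter _ (Finset.subset_univ _)
    have heq : ((V i).filter fun k => αo k = some h) =
        (Finset.univ.filter fun k => αo k = some h) :=
      Finset.eq_of_subset_of_card_le hsub' (le_trans (hcap h) h2le)
    constructor
    · rw [← heq]; exact Finset.filter_subset _ _
    · rw [← heq]
      exact le_antisymm (hle2 h) h2le
  set O := Finset.univ.filter (fun k => ∃ h ∈ U, αo k = some h) with hO
  have hOcard : O.card = 2 * U.card := by
    have hmaps : ∀ k ∈ O, αo k ∈ U.image some := by
      intro k hk
      rw [hO, Finset.mem_filter] at hk
      obtain ⟨h, hh, he⟩ := hk.2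
      rw [he]; exact Finset.mem_image_of_mem some hh
    have hsum := Finset.card_eq_sum_card_fiberwise hmaps
    rw [Finset.sum_image (fun a _ b _ h => Option.some_injective κ h)] at hsum
    have : ∀ h ∈ U, (O.filter fun k => αo k = some h).card = 2 := by
      intro h hh
      have hOf : (O.filter fun k => αo k = some h) =
          (Finset.univ.filter fun k => αo k = some h) := by
        ext k
        simp only [Finset.mem_filter, hO, Finset.mem_univ, true_and]
        constructor
        · rintro ⟨_, he⟩; exact he
        · intro he; exact ⟨⟨h, hh, he⟩, he⟩
      rw [hOf]
      obtain ⟨i, hi, h', hh', rfl⟩ : ∃ i ∈ Bt, ∃ h' ∈ H i, h' = h := by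
        rw [hU, Finset.mem_biUnion] at hh
        obtain ⟨i, hi, hhi⟩ := hh
        exact ⟨i, hi, h, hhi, rfl⟩
      exact (full i hi _ hh').2
    rw [Finset.sum_congr rfl this, Finset.sum_const, smul_eq_mul, mul_comm] at hsum
    exact hsum
  have hOprop : ∀ k ∈ O, β k ≠ ⊤ ∧ t ≤ w k ∧ allowed E r β k ⊆ U := by
    intro k hk
    rw [hO, Finset.mem_filter] at hk
    obtain ⟨_, h, hh, he⟩ := hk
    rw [hU, Finset.mem_biUnion] at hh
    obtain ⟨i, hi, hhi⟩ := hh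
    have hkV : k ∈ V i := (full i hi h hhi).1 (Finset.mem_filter.mpr ⟨Finset.mem_univ _, he⟩)
    obtain ⟨h1, h2, h3⟩ := hVmem i (hBtP i hi) k hkV
    refine ⟨h1, h2, h3.trans ?_⟩
    intro x hx
    rw [hU, Finset.mem_biUnion]
    exact ⟨i, hi, hx⟩
  set X := (M'.filter fun p => p.2 ∈ U).image Prod.fst with hX
  have hXcard : X.card ≤ U.card := by
    have h1 : X.card ≤ (M'.filter fun p => p.2 ∈ U).card := Finset.card_image_le
    have h2 : (M'.filter fun p => p.2 ∈ U).card =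
        ((M'.filter fun p => p.2 ∈ U).image Prod.snd).card := by
      rw [Finset.card_image_of_injOn]
      intro p hp q hq hpq
      rw [Finset.mem_coe, Finset.mem_filter] at hp hq
      exact hM'.2.2 p hp.1 q hq.1 hpq
    have h3 : (M'.filter fun p => p.2 ∈ U).image Prod.snd ⊆ U := by
      intro x hx
      obtain ⟨p, hp, rfl⟩ := Finset.mem_image.mp hx
      exact (Finset.mem_filter.mp hp).2
    calc X.card ≤ _ := h1
      _ = _ := h2
      _ ≤ U.card := Finset.card_le_card h3
  have hBtX : Bt ⊆ X := by
    intro i hi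
    obtain ⟨p, hp, hp1, hp2⟩ := hhouse i (hBtP i hi)
    rw [hX]
    apply Finset.mem_image.mpr
    refine ⟨p, Finset.mem_filter.mpr ⟨hp, ?_⟩, hp1⟩
    rw [hU, Finset.mem_biUnion]; exact ⟨i, hi, hp2⟩
  set N := O.filter (fun k => rho r M' k = β k) with hN
  have hNX : N ⊆ X := by
    intro k hk
    rw [hN, Finset.mem_filter] at hk
    obtain ⟨hkO, hkeq⟩ := hk
    obtain ⟨h1, _, h3⟩ := hOprop k hkO
    have hne : rho r M' k ≠ ⊤ := by rw [hkeq]; exact h1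
    obtain ⟨p, hp, hp1⟩ := rho_ne_top hne
    have hrho : rho r M' k = (r k p.2 : ℕ∞) := by
      have := rho_eq r hM' hp; rw [hp1] at this; exact this
    have hpU : p.2 ∈ U := by
      apply h3
      rw [allowed, Finset.mem_filter]
      refine ⟨Finset.mem_univ _, ?_, ?_⟩
      · have := hM'.1 hp
        rw [show ((k, p.2) : ι × κ) = p from by rw [← hp1]] at *
        exact this
      · rw [← hrho, hkeq]
    rw [hX]
    apply Finset.mem_image.mpr
    exact ⟨p, Finset.mem_filter.mpr ⟨hp, hpU⟩, hp1⟩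
  have hdisj : Disjoint Bt N := by
    rw [Finset.disjoint_left]
    intro i hiB hiN
    have h1 := (hBtP i hiB).1
    rw [hN, Finset.mem_filter] at hiN
    rw [hiN.2] at h1
    exact lt_irrefl _ h1
  have hBN : Bt.card + N.card ≤ U.card := by
    have : (Bt ∪ N).card = Bt.card + N.card := Finset.card_union_of_disjoint hdisj
    rw [← this]
    refine le_trans (Finset.card_le_card ?_) hXcard
    exact Finset.union_subset hBtX hNX
  have hOsplit : O ⊆ (O.filter fun k => β k < rho r M' k) ∪ (N ∪ Bt) := by
    intro k hk
    rcases lt_trichotomy (β k) (rho r M' k) with h | h | h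
    · exact Finset.mem_union_left _ (Finset.mem_filter.mpr ⟨hk, h⟩)
    · exact Finset.mem_union_right _ (Finset.mem_union_left _
        (Finset.mem_filter.mpr ⟨hk, h.symm⟩))
    · refine Finset.mem_union_right _ (Finset.mem_union_right _ ?_)
      rw [hBt, Finset.mem_filter]
      exact ⟨Finset.mem_univ _, h, (hOprop k hk).2.1⟩
  have hOG : (O.filter fun k => β k < rho r M' k) ⊆ Gt := by
    intro k hk
    rw [Finset.mem_filter] at hk
    rw [hGt, Finset.mem_filter]
    exact ⟨Finset.mem_univ _, hk.2, (hOprop k hk.1).2.1⟩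
  have hfinal : O.card ≤ Gt.card + N.card + Bt.card := by
    calc O.card ≤ ((O.filter fun k => β k < rho r M' k) ∪ (N ∪ Bt)).card :=
          Finset.card_le_card hOsplit
      _ ≤ (O.filter fun k => β k < rho r M' k).card + (N ∪ Bt).card :=
          Finset.card_union_le _ _
      _ ≤ (O.filter fun k => β k < rho r M' k).card + (N.card + Bt.card) :=
          Nat.add_le_add_left (Finset.card_union_le _ _) _
      _ ≤ Gt.card + N.card + Bt.card := by
          have := Finset.card_le_card hOG
          omega
  rw [hOcard] at hfinal
  omega

/-! ### Extraction of the violator structure for a beater -/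

lemma violator {M' : Finset (ι × κ)} (hM' : HA.IsMatching E M') {i : ι}
    (hbeat : rho r M' i < beta E r ord i) :
    ∃ (T : Finset ι) (Hs : Finset κ),
      (∀ k ∈ T, beta E r ord k ≠ ⊤ ∧ (ord k : ℕ) < (ord i : ℕ) ∧
        allowed E r (beta E r ord) k ⊆ Hs) ∧
      T.card = 2 * Hs.card ∧
      (∃ p ∈ M', p.1 = i ∧ p.2 ∈ Hs) := by
  have hne : rho r M' i ≠ ⊤ := ne_top_of_lt hbeat
  obtain ⟨p, hp, hp1⟩ := rho_ne_top hne
  have hrho : rho r M' i = (r i p.2 : ℕ∞) := by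
    have := rho_eq r hM' hp; rw [hp1] at this; exact this
  have hv : rho r M' i ∈ cand E r i := by
    rw [cand, Finset.mem_image]
    exact ⟨p, Finset.mem_filter.mpr ⟨hM'.1 hp, hp1⟩, hrho.symm⟩
  have hnf := beta_min hv hbeat
  set u := Function.update (prof E r ord (ord i)) i (rho r M' i) with hu
  rw [Feas] at hnf
  push_neg at hnf
  obtain ⟨S, hStop, hScard⟩ := hnf
  have hprofS : Feas E r (prof E r ord (ord i)) := feas_prof _
  have hiS : i ∈ S := by
    by_contra hiS
    have h1 : ∀ k ∈ S, prof E r ord (ord i) k ≠ ⊤ := by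
      intro k hk
      have : k ≠ i := fun he => hiS (he ▸ hk)
      rw [← Function.update_of_ne this (rho r M' i) (prof E r ord (ord i))]
      exact hStop k hk
    have h2 : S.biUnion (allowed E r (prof E r ord (ord i))) = S.biUnion (allowed E r u) := by
      apply Finset.biUnion_congr rfl
      intro k hk
      have : k ≠ i := fun he => hiS (he ▸ hk)
      exact allowed_congr (by rw [hu, Function.update_of_ne this])
    have := hprofS S h1
    rw [h2] at this
    omega
  refine ⟨S.erase i, S.biUnion (allowed E r u), ?_, ?_, ?_⟩
  · intro k hk
    have hki : k ≠ i := Finset.ne_of_mem_erase hk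
    have hkS : k ∈ S := Finset.mem_of_mem_erase hk
    have huk : u k = prof E r ord (ord i) k := by rw [hu, Function.update_of_ne hki]
    have hprofk : prof E r ord (ord i) k ≠ ⊤ := by rw [← huk]; exact hStop k hkS
    have hite := congrFun (prof_ord_eq (E := E) (r := r) (ord := ord) i) k
    by_cases hlt : (ord k : ℕ) < (ord i : ℕ)
    · rw [hite, if_pos hlt] at hprofk huk
      refine ⟨hprofk, hlt, ?_⟩
      have : allowed E r (beta E r ord) k = allowed E r u k := allowed_congr (by rw [huk])
      rw [this]
      intro x hx
      exact Finset.mem_biUnion.mpr ⟨k, hkS, hx⟩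
    · rw [hite, if_neg hlt] at hprofk
      exact absurd rfl hprofk
  · have hT1 : (S.erase i).card + 1 = S.card := Finset.card_erase_add_one hiS
    have hTb : ∀ k ∈ S.erase i, prof E r ord (ord i) k ≠ ⊤ := by
      intro k hk
      have hki : k ≠ i := Finset.ne_of_mem_erase hk
      rw [← Function.update_of_ne hki (rho r M' i) (prof E r ord (ord i))]
      exact hStop k (Finset.mem_of_mem_erase hk)
    have hTcard := hprofS (S.erase i) hTb
    have hTsub : (S.erase i).biUnion (allowed E r (prof E r ord (ord i))) ⊆
        S.biUnion (allowed E r u) := by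
      intro x hx
      rw [Finset.mem_biUnion] at hx ⊢
      obtain ⟨k, hk, hxk⟩ := hx
      have hki : k ≠ i := Finset.ne_of_mem_erase hk
      refine ⟨k, Finset.mem_of_mem_erase hk, ?_⟩
      rwa [allowed_congr (show u k = prof E r ord (ord i) k by rw [hu, Function.update_of_ne hki])]
    have := Finset.card_le_card hTsub
    omega
  · refine ⟨p, hp, hp1, ?_⟩
    apply Finset.mem_biUnion.mpr
    refine ⟨i, hiS, ?_⟩
    rw [allowed, Finset.mem_filter]
    refine ⟨Finset.mem_univ _, ?_, ?_⟩
    · have := hM'.1 hp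
      rwa [show ((i, p.2) : ι × κ) = p from by rw [← hp1]]
    · rw [hu, Function.update_self, hrho]

end HAProofAux

/-- Every house allocation instance with nonnegative agent weights and preference
lists that may contain ties admits a popular winning set of cardinality 2. -/
theorem house_allocation_popular_dimension_le_two
    {ι κ : Type*} [Fintype ι] [Fintype κ] (E : Finset (ι × κ))
    (w : ι → ℝ) (hw : ∀ i, 0 ≤ w i) (r : ι → κ → ℕ) :
    ∃ M₁ M₂ : Finset (ι × κ), HA.IsMatching E M₁ ∧ HA.IsMatching E M₂ ∧
      ∀ M' : Finset (ι × κ), HA.IsMatching E M' →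
        HA.phiSet w r {M₁, M₂} M' ≥ HA.phiSet' w r M' {M₁, M₂} := by
  classical
  open HAProofAux in
  -- set up the weight-decreasing order
  set e₀ := Fintype.equivFin ι with he₀
  set g : Fin (Fintype.card ι) → ℝ := fun x => -w (e₀.symm x) with hg
  set π := Tuple.sort g with hπ
  set ord : ι ≃ Fin (Fintype.card ι) := e₀.trans π.symm with hord_def
  have hord : ∀ a b : ι, (ord a : ℕ) ≤ (ord b : ℕ) → w b ≤ w a := by
    intro a b hab
    have h1 : ord a ≤ ord b := by exact_mod_cast hab
    have h2 : (g ∘ π) (ord a) ≤ (g ∘ π) (ord b) := Tuple.monotone_sort g h1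
    have ha : π (ord a) = e₀ a := by simp [hord_def]
    have hb : π (ord b) = e₀ b := by simp [hord_def]
    simp only [Function.comp_apply, ha, hb] at h2
    simp only [hg, Equiv.symm_apply_apply] at h2
    linarith
  set β := beta E r ord with hβ
  obtain ⟨fH, hfinj, hfmem⟩ := exists_hall (E := E) (r := r) (feas_beta (ord := ord))
  have hfE : ∀ x : {i : ι // β i ≠ ⊤}, ((x.1 : ι), (fH x).1) ∈ E := by
    intro x
    have := hfmem x
    rw [allowed, Finset.mem_filter] at this
    exact this.2.1
  have hfle : ∀ x : {i : ι // β i ≠ ⊤}, ((r x.1 (fH x).1 : ℕ∞)) ≤ β x.1 := by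
    intro x
    have := hfmem x
    rw [allowed, Finset.mem_filter] at this
    exact this.2.2
  set αo : ι → Option κ := fun k => if hk : β k ≠ ⊤ then some (fH ⟨k, hk⟩).1 else none with hαo
  have hαo_some : ∀ k (hk : β k ≠ ⊤), αo k = some (fH ⟨k, hk⟩).1 := by
    intro k hk; rw [hαo]; exact dif_pos hk
  have hαo_top : ∀ k, β k = ⊤ → αo k = none := by
    intro k hk; rw [hαo]; exact dif_neg (by simp [hk])
  have hcap : ∀ h : κ, (Finset.univ.filter fun k => αo k = some h).card ≤ 2 := by
    intro h
    have h2 : (Finset.univ.filter fun k => αo k = some h).card ≤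
        (Finset.univ : Finset Bool).card := by
      apply Finset.card_le_card_of_injOn
        (fun k => if hk : β k ≠ ⊤ then (fH ⟨k, hk⟩).2 else false)
      · intro k _; exact Finset.mem_univ _
      · intro k hk k' hk' heq
        rw [Finset.coe_filter, Set.mem_setOf_eq] at hk hk'
        have hbk : β k ≠ ⊤ := by
          intro hc
          rw [hαo_top k hc] at hk
          exact absurd hk.2 (by simp)
        have hbk' : β k' ≠ ⊤ := by
          intro hc
          rw [hαo_top k' hc] at hk'
          exact absurd hk'.2 (by simp)
        rw [hαo_some k hbk] at hk
        rw [hαo_some k' hbk'] at hk'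
        have heq2 : (dite (β k ≠ ⊤) (fun hk => (fH ⟨k, hk⟩).2) (fun _ => false)) =
            dite (β k' ≠ ⊤) (fun hk => (fH ⟨k', hk⟩).2) (fun _ => false) := heq
        rw [dif_pos hbk, dif_pos hbk'] at heq2
        have heq := heq2
        have h1 : (fH ⟨k, hbk⟩).1 = (fH ⟨k', hbk'⟩).1 := by
          rw [Option.some_injective κ hk.2, Option.some_injective κ hk'.2]
        have : fH ⟨k, hbk⟩ = fH ⟨k', hbk'⟩ := Prod.ext h1 heq
        have := hfinj this
        exact congrArg Subtype.val this
    simpa using h2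
  have hα : ∀ k, β k ≠ ⊤ → ∃ j ∈ allowed E r β k, αo k = some j := by
    intro k hk
    exact ⟨(fH ⟨k, hk⟩).1, hfmem ⟨k, hk⟩, hαo_some k hk⟩
  refine ⟨MB fH false, MB fH true, isMatching_MB fH hfinj hfE false,
    isMatching_MB fH hfinj hfE true, ?_⟩
  intro M' hM'
  -- violator structure
  have hviol : ∀ i : ι, rho r M' i < β i → ∃ (T : Finset ι) (Hs : Finset κ),
      (∀ k ∈ T, β k ≠ ⊤ ∧ (ord k : ℕ) < (ord i : ℕ) ∧ allowed E r β k ⊆ Hs) ∧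
      T.card = 2 * Hs.card ∧ (∃ p ∈ M', p.1 = i ∧ p.2 ∈ Hs) :=
    fun i h => violator hM' h
  choose! V H hV1 hV2 hV3 using hviol
  -- threshold cardinalities
  have hcardt : ∀ t : ℝ,
      (Finset.univ.filter fun i => rho r M' i < β i ∧ t ≤ w i).card ≤
      (Finset.univ.filter fun i => β i < rho r M' i ∧ t ≤ w i).card := by
    intro t
    apply card_beaters_le_gainers w hM' β αo t hcap hα V H
    · intro i hi k hk
      obtain ⟨h1, h2, h3⟩ := hV1 i hi.1 k hk
      exact ⟨h1, le_trans hi.2 (hord k i (le_of_lt h2)), h3⟩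
    · exact fun i hi => hV2 i hi.1
    · exact fun i hi => hV3 i hi.1
  -- sum over β-classes
  have hsumβ : ∑ i ∈ Finset.univ.filter (fun i => rho r M' i < β i), w i ≤
      ∑ i ∈ Finset.univ.filter (fun i => β i < rho r M' i), w i := by
    apply sum_le_of_card_filter_le w hw
    intro t
    rw [Finset.filter_filter, Finset.filter_filter]
    exact hcardt t
  -- rewrite the φ's
  have hphi1 : HA.phiSet w r {MB fH false, MB fH true} M' =
      ∑ i ∈ Finset.univ.filter (fun i => bstar r β fH i < rho r M' i), w i := by
    rw [HA.phiSet, Finset.sum_filter]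
    apply Finset.sum_congr rfl
    intro i _
    have h := prefers_pair_iff (r := r) fH hM' i
    simp only [h]
    rfl
  have hphi2 : HA.phiSet' w r M' {MB fH false, MB fH true} =
      ∑ i ∈ Finset.univ.filter (fun i => rho r M' i < bstar r β fH i), w i := by
    rw [HA.phiSet', Finset.sum_filter]
    apply Finset.sum_congr rfl
    intro i _
    have h := prefers_over_pair_iff (r := r) fH hM' i
    simp only [h]
    rfl
  have hble : ∀ i, bstar r β fH i ≤ β i := by
    intro i
    rw [bstar]
    split
    · rename_i h; exact hfle ⟨i, h⟩
    · rename_i h; push_neg at h; rw [h]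
  rw [hphi1, hphi2]
  have c1 : ∑ i ∈ Finset.univ.filter (fun i => rho r M' i < bstar r β fH i), w i ≤
      ∑ i ∈ Finset.univ.filter (fun i => rho r M' i < β i), w i := by
    apply Finset.sum_le_sum_of_subset_of_nonneg
    · apply Finset.monotone_filter_right
      intro i _ hi
      exact lt_of_lt_of_le hi (hble i)
    · exact fun i _ _ => hw i
  have c2 : ∑ i ∈ Finset.univ.filter (fun i => β i < rho r M' i), w i ≤
      ∑ i ∈ Finset.univ.filter (fun i => bstar r β fH i < rho r M' i), w i := by
    apply Finset.sum_le_sum_of_subset_of_nonneg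
    · apply Finset.monotone_filter_right
      intro i _ hi
      exact lt_of_le_of_lt (hble i) hi
    · exact fun i _ _ => hw i
  linarith
end

section
/- In any marriage instance with strict preferences and unit weights, every stable matching is popular. Here a matching M is stable if there is no adjacent pair (m, w) such that m strictly prefers w over his situation in M (i.e., m is unmatched in M or strictly prefers w over his partner in M) and w strictly prefers m over her situation in M (i.e., w is unmatched in M or strictly prefers m over her partner in M). -/
open scoped Classical

/-- `M` is a matching in the marriage instance with adjacency `E`:
every man occurs in at most one pair and every woman occurs in at most one pair. -/
def MG.IsMatching {α β : Type*} (E M : Finset (α × β)) : Prop :=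
  M ⊆ E ∧ (∀ p ∈ M, ∀ q ∈ M, p.1 = q.1 → p = q) ∧ (∀ p ∈ M, ∀ q ∈ M, p.2 = q.2 → p = q)

/-- Man `i` strictly prefers matching `M` over matching `M'`. -/
def MG.PrefersA {α β : Type*} (rA : α → β → ℕ) (M M' : Finset (α × β)) (i : α) : Prop :=
  ∃ p ∈ M, p.1 = i ∧ ∀ q ∈ M', q.1 = i → rA i p.2 < rA i q.2

/-- Woman `j` strictly prefers matching `M` over matching `M'`. -/
def MG.PrefersB {α β : Type*} (rB : β → α → ℕ) (M M' : Finset (α × β)) (j : β) : Prop :=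
  ∃ p ∈ M, p.2 = j ∧ ∀ q ∈ M', q.2 = j → rB j p.1 < rB j q.1

/-- `φ(M, M')`: total weight of agents (men and women) strictly preferring `M` over `M'`. -/
noncomputable def MG.phi {α β : Type*} [Fintype α] [Fintype β]
    (wA : α → ℝ) (wB : β → ℝ) (rA : α → β → ℕ) (rB : β → α → ℕ)
    (M M' : Finset (α × β)) : ℝ :=
  (∑ i, if MG.PrefersA rA M M' i then wA i else 0) +
    (∑ j, if MG.PrefersB rB M M' j then wB j else 0)

lemma card_le_of_rel {α β : Type*} [Fintype α] [Fintype β]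
    (P : α → Prop) (Q : β → Prop) (R : α → β → Prop)
    (h : ∀ i, P i → ∃ j, R i j ∧ Q j)
    (hinj : ∀ i i' j, R i j → R i' j → i = i') :
    (Finset.univ.filter P).card ≤ (Finset.univ.filter Q).card := by
  rcases (Finset.univ.filter P).eq_empty_or_nonempty with he | ⟨i0, hi0⟩
  · simp [he]
  · have hP0 : P i0 := (Finset.mem_filter.mp hi0).2
    obtain ⟨j0, -, -⟩ := h i0 hP0
    haveI : Nonempty β := ⟨j0⟩
    apply Finset.card_le_card_of_injOn
      (fun i => if h' : P i then (h i h').choose else Classical.arbitrary β)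
    · intro i hi
      have hP : P i := (Finset.mem_filter.mp hi).2
      simp only [dif_pos hP]
      exact Finset.mem_filter.mpr ⟨Finset.mem_univ _, (h i hP).choose_spec.2⟩
    · intro i hi i' hi' hij
      have hP : P i := (Finset.mem_filter.mp hi).2
      have hP' : P i' := (Finset.mem_filter.mp hi').2
      simp only [dif_pos hP, dif_pos hP'] at hij
      exact hinj i i' _ (h i hP).choose_spec.1 (hij ▸ (h i' hP').choose_spec.1)

/-- In any marriage instance with strict preferences and unit weights,
every stable matching is popular. -/
theorem stable_matching_is_popular
    {α β : Type*} [Fintype α] [Fintype β] (E : Finset (α × β))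
    (rA : α → β → ℕ) (rB : β → α → ℕ)
    (hstrictA : ∀ i j j', (i, j) ∈ E → (i, j') ∈ E → rA i j = rA i j' → j = j')
    (hstrictB : ∀ j i i', (i, j) ∈ E → (i', j) ∈ E → rB j i = rB j i' → i = i')
    (M : Finset (α × β)) (hM : MG.IsMatching E M)
    -- stability: no adjacent pair (m, w) where both strictly prefer each other
    -- over their situation in M
    (hstable : ∀ p ∈ E,
      ¬((∀ q ∈ M, q.1 = p.1 → rA p.1 p.2 < rA p.1 q.2) ∧
        (∀ q ∈ M, q.2 = p.2 → rB p.2 p.1 < rB p.2 q.1))) :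
    ∀ M' : Finset (α × β), MG.IsMatching E M' →
      MG.phi (fun _ => (1 : ℝ)) (fun _ => (1 : ℝ)) rA rB M M' ≥
        MG.phi (fun _ => (1 : ℝ)) (fun _ => (1 : ℝ)) rA rB M' M := by
  intro M' hM'
  obtain ⟨hME, hM1, hM2⟩ := hM
  obtain ⟨hM'E, hM'1, hM'2⟩ := hM'
  -- key lemma 1: if man i prefers M' over M, then his M'-partner prefers M over M'
  have key1 : ∀ i, MG.PrefersA rA M' M i → ∃ j, (i, j) ∈ M' ∧ MG.PrefersB rB M M' j := by
    intro i hi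
    obtain ⟨p, hp, hpi, hlt⟩ := hi
    obtain ⟨a, b⟩ := p
    simp only at hpi hlt
    subst hpi
    refine ⟨b, hp, ?_⟩
    have hE : (a, b) ∈ E := hM'E hp
    have hns := hstable (a, b) hE
    rw [not_and] at hns
    have hns' := hns hlt
    push_neg at hns'
    obtain ⟨q, hq, hq2, hge⟩ := hns'
    -- hge : rB b q.1 ≤ rB b a  (since ¬ <)
    have hqa : q.1 ≠ a := by
      intro h
      have := hlt q hq h
      rw [hq2] at this
      exact lt_irrefl _ this
    have hlt' : rB b q.1 < rB b a := by
      rcases lt_or_eq_of_le hge with h | h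
      · exact h
      · exfalso
        apply hqa
        apply hstrictB b q.1 a _ hE h
        have : ((q.1, q.2) : α × β) ∈ E := hME hq
        rwa [hq2] at this
    refine ⟨q, hq, hq2, ?_⟩
    intro q' hq' hq'2
    have : q' = (a, b) := hM'2 q' hq' (a, b) hp (by rw [hq'2])
    rw [this]
    exact hlt'
  -- key lemma 2: if woman j prefers M' over M, then her M'-partner prefers M over M'
  have key2 : ∀ j, MG.PrefersB rB M' M j → ∃ i, (i, j) ∈ M' ∧ MG.PrefersA rA M M' i := by
    intro j hj
    obtain ⟨p, hp, hpj, hlt⟩ := hj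
    obtain ⟨a, b⟩ := p
    simp only at hpj hlt
    subst hpj
    refine ⟨a, hp, ?_⟩
    have hE : (a, b) ∈ E := hM'E hp
    have hns := hstable (a, b) hE
    rw [not_and'] at hns
    have hns' := hns hlt
    push_neg at hns'
    obtain ⟨q, hq, hq1, hge⟩ := hns'
    have hqb : q.2 ≠ b := by
      intro h
      have := hlt q hq h
      rw [hq1] at this
      exact lt_irrefl _ this
    have hlt' : rA a q.2 < rA a b := by
      rcases lt_or_eq_of_le hge with h | h
      · exact h
      · exfalso
        apply hqb
        apply hstrictA a q.2 b _ hE h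
        have : ((q.1, q.2) : α × β) ∈ E := hME hq
        rwa [hq1] at this
    refine ⟨q, hq, hq1, ?_⟩
    intro q' hq' hq'1
    have : q' = (a, b) := hM'1 q' hq' (a, b) hp (by rw [hq'1])
    rw [this]
    exact hlt'
  have h1 : (Finset.univ.filter (MG.PrefersA rA M' M)).card ≤
      (Finset.univ.filter (MG.PrefersB rB M M')).card := by
    apply card_le_of_rel _ _ (fun i j => (i, j) ∈ M') key1
    intro i i' j h h'
    have := hM'2 (i, j) h (i', j) h' rfl
    exact (Prod.mk.injEq _ _ _ _).mp this |>.1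
  have h2 : (Finset.univ.filter (MG.PrefersB rB M' M)).card ≤
      (Finset.univ.filter (MG.PrefersA rA M M')).card := by
    apply card_le_of_rel _ _ (fun j i => (i, j) ∈ M') key2
    intro j j' i h h'
    have := hM'1 (i, j) h (i, j') h' rfl
    exact (Prod.mk.injEq _ _ _ _).mp this |>.2
  rw [ge_iff_le, MG.phi, MG.phi, Finset.sum_boole, Finset.sum_boole,
    Finset.sum_boole, Finset.sum_boole]
  have : (Finset.univ.filter (MG.PrefersA rA M' M)).card +
      (Finset.univ.filter (MG.PrefersB rB M' M)).card ≤
      (Finset.univ.filter (MG.PrefersA rA M M')).card +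
      (Finset.univ.filter (MG.PrefersB rB M M')).card := by omega
  exact_mod_cast this
end

section
/- Every marriage instance with strict preferences and unit weights admits a popular matching; that is, the popular dimension of the marriage problem with unweighted agents and strict preference orderings is 1. -/
open scoped Classical

section Aux

variable {α β : Type*}

/-- `p` is a top (minimal-rank) edge for its man among edges in `F`. -/
def MGTop (rA : α → β → ℕ) (F : Finset (α × β)) (p : α × β) : Prop :=
  p ∈ F ∧ ∀ q ∈ F, q.1 = p.1 → rA p.1 p.2 ≤ rA p.1 q.2

/-- Stability from the men's side. -/
def MGStableA (E : Finset (α × β)) (rA : α → β → ℕ) (rB : β → α → ℕ)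
    (M : Finset (α × β)) : Prop :=
  ∀ a b, (a, b) ∈ E → (∀ q ∈ M, q.1 = a → rA a b < rA a q.2) →
    ∃ q ∈ M, q.2 = b ∧ rB b q.1 < rB b a

/-- Stability from the women's side. -/
def MGStableB (E : Finset (α × β)) (rA : α → β → ℕ) (rB : β → α → ℕ)
    (M : Finset (α × β)) : Prop :=
  ∀ a b, (a, b) ∈ E → (∀ q ∈ M, q.2 = b → rB b a < rB b q.1) →
    ∃ q ∈ M, q.1 = a ∧ rA a q.2 < rA a b

/-- The Gale–Shapley deletion invariant: every deleted edge `(a,b)` was deleted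
because woman `b` has a strictly better man `a'` whose top remaining choice is `b`. -/
def MGInv (E : Finset (α × β)) (rA : α → β → ℕ) (rB : β → α → ℕ)
    (F : Finset (α × β)) : Prop :=
  ∀ p ∈ E, p ∉ F → ∃ a', MGTop rA F (a', p.2) ∧ rB p.2 a' < rB p.2 p.1

lemma MGTop.mono {rA : α → β → ℕ} {F F' : Finset (α × β)} {p : α × β}
    (h : MGTop rA F p) (hsub : F' ⊆ F) (hmem : p ∈ F') : MGTop rA F' p :=
  ⟨hmem, fun q hq => h.2 q (hsub hq)⟩

/-- Terminal case: no two distinct top edges share a woman, so the set of top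
edges is a stable matching. -/
lemma exists_stable_of_noconf
    (E : Finset (α × β)) (rA : α → β → ℕ) (rB : β → α → ℕ)
    (hstrictA : ∀ i j j', (i, j) ∈ E → (i, j') ∈ E → rA i j = rA i j' → j = j')
    (F : Finset (α × β)) (hFE : F ⊆ E) (hinv : MGInv E rA rB F)
    (hnc : ∀ p q, MGTop rA F p → MGTop rA F q → p.2 = q.2 → p = q) :
    ∃ M, MG.IsMatching E M ∧ MGStableA E rA rB M ∧ MGStableB E rA rB M := by
  classical
  refine ⟨F.filter (fun p => ∀ q ∈ F, q.1 = p.1 → rA p.1 p.2 ≤ rA p.1 q.2), ?_, ?_, ?_⟩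
  · refine ⟨fun p hp => hFE (Finset.mem_filter.1 hp).1, ?_, ?_⟩
    · intro p hp q hq h1
      obtain ⟨hpF, hpmin⟩ := Finset.mem_filter.1 hp
      obtain ⟨hqF, hqmin⟩ := Finset.mem_filter.1 hq
      have h1' : rA p.1 p.2 ≤ rA p.1 q.2 := hpmin q hqF h1.symm
      have h2' : rA p.1 q.2 ≤ rA p.1 p.2 := by
        have := hqmin p hpF h1
        rwa [← h1] at this
      have heq : rA p.1 p.2 = rA p.1 q.2 := le_antisymm h1' h2'
      have h2 : p.2 = q.2 := by
        apply hstrictA p.1 p.2 q.2 (by simpa using hFE hpF) _ heq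
        have : (q.1, q.2) ∈ E := by simpa using hFE hqF
        rwa [← h1] at this
      exact Prod.ext h1 h2
    · intro p hp q hq h2
      obtain ⟨hpF, hpmin⟩ := Finset.mem_filter.1 hp
      obtain ⟨hqF, hqmin⟩ := Finset.mem_filter.1 hq
      exact hnc p q ⟨hpF, hpmin⟩ ⟨hqF, hqmin⟩ h2
  · -- StableA
    intro a b hE hpref
    by_cases hab : (a, b) ∈ F
    · exfalso
      obtain ⟨p, hpmem, hpmin⟩ :=
        Finset.exists_min_image (F.filter (fun q => q.1 = a)) (fun q => rA a q.2)
          ⟨(a, b), Finset.mem_filter.2 ⟨hab, rfl⟩⟩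
      obtain ⟨hpF, hp1⟩ := Finset.mem_filter.1 hpmem
      have hpM : p ∈ F.filter (fun p => ∀ q ∈ F, q.1 = p.1 → rA p.1 p.2 ≤ rA p.1 q.2) := by
        refine Finset.mem_filter.2 ⟨hpF, fun q hq hq1 => ?_⟩
        have := hpmin q (Finset.mem_filter.2 ⟨hq, by rw [hq1, hp1]⟩)
        simpa [hp1] using this
      have hlt := hpref p hpM hp1
      have hle : rA a p.2 ≤ rA a b := by
        have := (Finset.mem_filter.1 hpM).2 (a, b) hab (by rw [hp1])
        simpa [hp1] using this
      omega
    · obtain ⟨a', htop, hlt⟩ := hinv (a, b) hE hab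
      refine ⟨(a', b), Finset.mem_filter.2 ⟨htop.1, fun q hq hq1 => htop.2 q hq hq1⟩, rfl, hlt⟩
  · -- StableB
    intro a b hE hpref
    by_cases hab : (a, b) ∈ F
    · obtain ⟨p, hpmem, hpmin⟩ :=
        Finset.exists_min_image (F.filter (fun q => q.1 = a)) (fun q => rA a q.2)
          ⟨(a, b), Finset.mem_filter.2 ⟨hab, rfl⟩⟩
      obtain ⟨hpF, hp1⟩ := Finset.mem_filter.1 hpmem
      have hpM : p ∈ F.filter (fun p => ∀ q ∈ F, q.1 = p.1 → rA p.1 p.2 ≤ rA p.1 q.2) := by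
        refine Finset.mem_filter.2 ⟨hpF, fun q hq hq1 => ?_⟩
        have := hpmin q (Finset.mem_filter.2 ⟨hq, by rw [hq1, hp1]⟩)
        simpa [hp1] using this
      have hle : rA a p.2 ≤ rA a b :=
        hpmin (a, b) (Finset.mem_filter.2 ⟨hab, rfl⟩)
      rcases lt_or_eq_of_le hle with hlt | heq
      · exact ⟨p, hpM, hp1, hlt⟩
      · exfalso
        have hpE : (a, p.2) ∈ E := by rw [← hp1]; exact hFE hpF
        have hp2 : p.2 = b := hstrictA a p.2 b hpE hE heq
        have hcon := hpref p hpM hp2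
        rw [hp1] at hcon
        omega
    · exfalso
      obtain ⟨a', htop, hlt⟩ := hinv (a, b) hE hab
      have hmem : (a', b) ∈ F.filter (fun p => ∀ q ∈ F, q.1 = p.1 → rA p.1 p.2 ≤ rA p.1 q.2) :=
        Finset.mem_filter.2 ⟨htop.1, fun q hq hq1 => htop.2 q hq hq1⟩
      exact absurd (hpref (a', b) hmem rfl) (not_lt.2 (le_of_lt hlt))

/-- Erasing the rejected edge preserves the invariant. -/
lemma MGInv.erase
    {E : Finset (α × β)} {rA : α → β → ℕ} {rB : β → α → ℕ}
    {F : Finset (α × β)} (hinv : MGInv E rA rB F)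
    {p q : α × β} (hp : MGTop rA F p) (hq : MGTop rA F q) (he : q.2 = p.2)
    (hne : q ≠ p) (hlt : rB p.2 q.1 < rB p.2 p.1) :
    MGInv E rA rB (F.erase p) := by
  intro r hrE hr
  have hqmem : q ∈ F.erase p := Finset.mem_erase.2 ⟨hne, hq.1⟩
  have hqtop : MGTop rA (F.erase p) q := hq.mono (Finset.erase_subset _ _) hqmem
  by_cases hrF : r ∈ F
  · have hrp : r = p := by
      by_contra h
      exact hr (Finset.mem_erase.2 ⟨h, hrF⟩)
    refine ⟨q.1, ?_, ?_⟩
    · have hqr : (q.1, r.2) = q := Prod.ext rfl (by rw [hrp, ← he])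
      rw [hqr]; exact hqtop
    · rw [hrp]; exact hlt
  · obtain ⟨a', htop, hlt'⟩ := hinv r hrE hrF
    by_cases hap : (a', r.2) = p
    · have h2 : r.2 = p.2 := by rw [← hap]
      have h1 : a' = p.1 := by rw [← hap]
      refine ⟨q.1, ?_, ?_⟩
      · have hqr : (q.1, r.2) = q := Prod.ext rfl (by rw [h2, ← he])
        rw [hqr]; exact hqtop
      · rw [h2]
        refine lt_trans hlt ?_
        rw [← h1, ← h2]
        exact hlt'
    · exact ⟨a', htop.mono (Finset.erase_subset _ _)
        (Finset.mem_erase.2 ⟨hap, htop.1⟩), hlt'⟩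

/-- Gale–Shapley by induction on the number of remaining edges. -/
lemma exists_stable_aux
    (E : Finset (α × β)) (rA : α → β → ℕ) (rB : β → α → ℕ)
    (hstrictA : ∀ i j j', (i, j) ∈ E → (i, j') ∈ E → rA i j = rA i j' → j = j')
    (hstrictB : ∀ j i i', (i, j) ∈ E → (i', j) ∈ E → rB j i = rB j i' → i = i') :
    ∀ n (F : Finset (α × β)), F.card ≤ n → F ⊆ E → MGInv E rA rB F →
      ∃ M, MG.IsMatching E M ∧ MGStableA E rA rB M ∧ MGStableB E rA rB M := by
  intro n
  induction n with
  | zero =>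
      intro F hc hFE hinv
      have hF : F = ∅ := Finset.card_eq_zero.1 (Nat.le_zero.1 hc)
      subst hF
      exact exists_stable_of_noconf E rA rB hstrictA ∅ hFE hinv
        (fun p q hp _ _ => absurd hp.1 (Finset.notMem_empty _))
  | succ n ih =>
      intro F hc hFE hinv
      by_cases hcf : ∃ p q, MGTop rA F p ∧ MGTop rA F q ∧ p.2 = q.2 ∧ p ≠ q
      · obtain ⟨p, q, hp, hq, he, hne⟩ := hcf
        have hpE : (p.1, p.2) ∈ E := by simpa using hFE hp.1
        have hqE : (q.1, p.2) ∈ E := by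
          rw [show (q.1, p.2) = q from Prod.ext rfl he]
          exact hFE hq.1
        rcases Nat.lt_trichotomy (rB p.2 q.1) (rB p.2 p.1) with hlt | heq | hgt
        · refine ih (F.erase p) ?_ (fun x hx => hFE (Finset.mem_erase.1 hx).2)
            (hinv.erase hp hq he.symm (fun h => hne h.symm) hlt)
          rw [Finset.card_erase_of_mem hp.1]
          omega
        · exact absurd (Prod.ext (hstrictB p.2 q.1 p.1 hqE hpE heq) he.symm).symm hne
        · refine ih (F.erase q) ?_ (fun x hx => hFE (Finset.mem_erase.1 hx).2)
            (hinv.erase hq hp he hne (by rw [← he]; exact hgt))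
          rw [Finset.card_erase_of_mem hq.1]
          omega
      · push_neg at hcf
        exact exists_stable_of_noconf E rA rB hstrictA F hFE hinv
          (fun p q hp hq h2 => by
            by_contra hne
            exact hne (by_contra fun h => h (hcf p q hp hq h2)))

/-- A stable matching exists. -/
lemma exists_stable
    (E : Finset (α × β)) (rA : α → β → ℕ) (rB : β → α → ℕ)
    (hstrictA : ∀ i j j', (i, j) ∈ E → (i, j') ∈ E → rA i j = rA i j' → j = j')
    (hstrictB : ∀ j i i', (i, j) ∈ E → (i', j) ∈ E → rB j i = rB j i' → i = i') :
    ∃ M, MG.IsMatching E M ∧ MGStableA E rA rB M ∧ MGStableB E rA rB M :=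
  exists_stable_aux E rA rB hstrictA hstrictB E.card E le_rfl (Finset.Subset.refl E)
    (fun p hp hnp => absurd hp hnp)

/-- Per-edge vote inequality: for each edge of `M'`, the combined vote of its two
endpoints for `M'` against a stable matching `M` is nonpositive. -/
lemma edge_vote
    {E : Finset (α × β)} {rA : α → β → ℕ} {rB : β → α → ℕ}
    {M M' : Finset (α × β)}
    (hM' : MG.IsMatching E M')
    (hA : MGStableA E rA rB M) (hB : MGStableB E rA rB M)
    {e : α × β} (he : e ∈ M') :
    ((if MG.PrefersA rA M' M e.1 then (1 : ℝ) else 0) -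
        (if MG.PrefersA rA M M' e.1 then (1 : ℝ) else 0)) +
      ((if MG.PrefersB rB M' M e.2 then (1 : ℝ) else 0) -
        (if MG.PrefersB rB M M' e.2 then (1 : ℝ) else 0)) ≤ 0 := by
  obtain ⟨hsub', huniq1', huniq2'⟩ := hM'
  have heE : (e.1, e.2) ∈ E := by simpa using hsub' he
  have claim1 : MG.PrefersA rA M' M e.1 →
      MG.PrefersB rB M M' e.2 ∧ ¬ MG.PrefersB rB M' M e.2 := by
    rintro ⟨p, hpM', hp1, hplt⟩
    have hpe : p = e := huniq1' p hpM' e he hp1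
    subst hpe
    obtain ⟨q0, hq0M, hq02, hq0lt⟩ := hA p.1 p.2 heE hplt
    refine ⟨⟨q0, hq0M, hq02, ?_⟩, ?_⟩
    · intro q hq hq2
      have hqe : q = p := huniq2' q hq p he hq2
      rw [hqe]
      exact hq0lt
    · rintro ⟨p', hp'M', hp'2, hp'lt⟩
      have hp'e : p' = p := huniq2' p' hp'M' p he hp'2
      subst hp'e
      have := hp'lt q0 hq0M hq02
      omega
  have claim2 : MG.PrefersB rB M' M e.2 →
      MG.PrefersA rA M M' e.1 ∧ ¬ MG.PrefersA rA M' M e.1 := by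
    rintro ⟨p, hpM', hp2, hplt⟩
    have hpe : p = e := huniq2' p hpM' e he hp2
    subst hpe
    obtain ⟨q0, hq0M, hq01, hq0lt⟩ := hB p.1 p.2 heE hplt
    refine ⟨⟨q0, hq0M, hq01, ?_⟩, ?_⟩
    · intro q hq hq1
      have hqe : q = p := huniq1' q hq p he hq1
      rw [hqe]
      exact hq0lt
    · rintro ⟨p', hp'M', hp'1, hp'lt⟩
      have hp'e : p' = p := huniq1' p' hp'M' p he hp'1
      subst hp'e
      have := hp'lt q0 hq0M hq01
      omega
  by_cases hpA : MG.PrefersA rA M' M e.1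
  · obtain ⟨hqB, hnpB⟩ := claim1 hpA
    simp only [if_pos hpA, if_pos hqB, if_neg hnpB]
    split_ifs <;> norm_num
  · by_cases hpB : MG.PrefersB rB M' M e.2
    · obtain ⟨hqA, _⟩ := claim2 hpB
      simp only [if_neg hpA, if_pos hpB, if_pos hqA]
      split_ifs <;> norm_num
    · simp only [if_neg hpA, if_neg hpB]
      split_ifs <;> norm_num

end Aux

/-- A stable matching is popular (unit weights). -/
lemma stable_popular
    {α β : Type*} [Fintype α] [Fintype β] (E : Finset (α × β))
    (rA : α → β → ℕ) (rB : β → α → ℕ)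
    {M : Finset (α × β)}
    (hA : MGStableA E rA rB M) (hB : MGStableB E rA rB M)
    (M' : Finset (α × β)) (hM' : MG.IsMatching E M') :
    MG.phi (fun _ => (1 : ℝ)) (fun _ => (1 : ℝ)) rA rB M M' ≥
      MG.phi (fun _ => (1 : ℝ)) (fun _ => (1 : ℝ)) rA rB M' M := by
  classical
  set gA : α → ℝ := fun i =>
    (if MG.PrefersA rA M' M i then (1 : ℝ) else 0) -
      (if MG.PrefersA rA M M' i then (1 : ℝ) else 0) with hgA
  set gB : β → ℝ := fun j =>
    (if MG.PrefersB rB M' M j then (1 : ℝ) else 0) -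
      (if MG.PrefersB rB M M' j then (1 : ℝ) else 0) with hgB
  have key : ∑ e ∈ M', (gA e.1 + gB e.2) ≤ 0 :=
    Finset.sum_nonpos (fun e he => edge_vote hM' hA hB he)
  have hAsum : ∑ i : α, gA i ≤ ∑ e ∈ M', gA e.1 := by
    have himg : ∑ i ∈ M'.image Prod.fst, gA i = ∑ e ∈ M', gA e.1 :=
      Finset.sum_image (fun x hx y hy h => hM'.2.1 x hx y hy h)
    have hcompl : ∑ i ∈ (M'.image Prod.fst)ᶜ, gA i ≤ 0 := by
      refine Finset.sum_nonpos (fun i hi => ?_)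
      have hni : ¬ MG.PrefersA rA M' M i := by
        rintro ⟨p, hp, hp1, -⟩
        exact (Finset.mem_compl.1 hi) (Finset.mem_image.2 ⟨p, hp, hp1⟩)
      simp only [hgA, if_neg hni]
      split_ifs <;> norm_num
    have := Finset.sum_add_sum_compl (M'.image Prod.fst) gA
    linarith [himg]
  have hBsum : ∑ j : β, gB j ≤ ∑ e ∈ M', gB e.2 := by
    have himg : ∑ j ∈ M'.image Prod.snd, gB j = ∑ e ∈ M', gB e.2 :=
      Finset.sum_image (fun x hx y hy h => hM'.2.2 x hx y hy h)
    have hcompl : ∑ j ∈ (M'.image Prod.snd)ᶜ, gB j ≤ 0 := by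
      refine Finset.sum_nonpos (fun j hj => ?_)
      have hnj : ¬ MG.PrefersB rB M' M j := by
        rintro ⟨p, hp, hp2, -⟩
        exact (Finset.mem_compl.1 hj) (Finset.mem_image.2 ⟨p, hp, hp2⟩)
      simp only [hgB, if_neg hnj]
      split_ifs <;> norm_num
    have := Finset.sum_add_sum_compl (M'.image Prod.snd) gB
    linarith [himg]
  rw [Finset.sum_add_distrib] at key
  simp only [hgA, hgB, Finset.sum_sub_distrib] at hAsum hBsum key
  simp only [MG.phi, ge_iff_le]
  linarith

/-- Every marriage instance with strict preferences and unit weights admits a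
popular matching: the popular dimension of the marriage problem with unweighted
agents and strict preference orderings is 1. -/
theorem marriage_popular_matching_exists
    {α β : Type*} [Fintype α] [Fintype β] (E : Finset (α × β))
    (rA : α → β → ℕ) (rB : β → α → ℕ)
    (hstrictA : ∀ i j j', (i, j) ∈ E → (i, j') ∈ E → rA i j = rA i j' → j = j')
    (hstrictB : ∀ j i i', (i, j) ∈ E → (i', j) ∈ E → rB j i = rB j i' → i = i') :
    ∃ M : Finset (α × β), MG.IsMatching E M ∧
      ∀ M' : Finset (α × β), MG.IsMatching E M' →
        MG.phi (fun _ => (1 : ℝ)) (fun _ => (1 : ℝ)) rA rB M M' ≥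
          MG.phi (fun _ => (1 : ℝ)) (fun _ => (1 : ℝ)) rA rB M' M := by
  obtain ⟨M, hM, hA, hB⟩ := exists_stable E rA rB hstrictA hstrictB
  exact ⟨M, hM, fun M' hM' => stable_popular E rA rB hA hB M' hM'⟩
end

section
/- There is no popular matching in the following unweighted marriage instance with ties: men A = {m₀, m₁, m₂, d₀, d₁} and women B = {w₀, w₁, e₀, e₁, e₂}, all with unit weight, with every man adjacent to every woman; each of m₀, m₁, m₂ strictly prefers w₀ over w₁, strictly prefers w₁ over every woman in {e₀, e₁, e₂}, and is indifferent among e₀, e₁, e₂; the dummy men d₀, d₁ are indifferent among all women; and every woman is indifferent among all men. That is, for every matching M there exists a matching M' with φ(M', M) > φ(M, M'). Hence the popular dimension of the marriage problem with ties in the preference lists is at least 2. -/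
open scoped Classical

/-- rank of man `i`'s partner in `M` (3 if unmatched) -/
noncomputable def MG.rho (M : Finset (Fin 5 × Fin 5)) (i : Fin 5) : ℕ :=
  if h : ∃ p, p ∈ M ∧ p.1 = i then min ((h.choose).2 : ℕ) 2 else 3

lemma MG.rho_le (M : Finset (Fin 5 × Fin 5)) (i : Fin 5) : MG.rho M i ≤ 3 := by
  rw [MG.rho]; split <;> omega

lemma MG.rho_spec (M : Finset (Fin 5 × Fin 5)) (hM : MG.IsMatching Finset.univ M)
    (i : Fin 5) : ∀ q ∈ M, q.1 = i → min (q.2 : ℕ) 2 = MG.rho M i := by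
  intro q hq hqi
  have h : ∃ p, p ∈ M ∧ p.1 = i := ⟨q, hq, hqi⟩
  rw [MG.rho, dif_pos h]
  obtain ⟨hc1, hc2⟩ := h.choose_spec
  have := hM.2.1 q hq h.choose hc1 (by rw [hqi, hc2])
  rw [this]

lemma MG.rho_matched (M : Finset (Fin 5 × Fin 5)) (i : Fin 5) (h : MG.rho M i ≤ 2) :
    ∃ p, p ∈ M ∧ p.1 = i ∧ min (p.2 : ℕ) 2 = MG.rho M i := by
  by_cases h' : ∃ p, p ∈ M ∧ p.1 = i
  · exact ⟨h'.choose, h'.choose_spec.1, h'.choose_spec.2, by rw [MG.rho, dif_pos h']⟩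
  · rw [MG.rho, dif_neg h'] at h; omega

lemma MG.rho_uniq (M : Finset (Fin 5 × Fin 5)) (hM : MG.IsMatching Finset.univ M)
    {i j : Fin 5} (hij : i ≠ j) {k : ℕ} (hk : k ≤ 1)
    (hi : MG.rho M i = k) (hj : MG.rho M j = k) : False := by
  obtain ⟨p, hp, hpi, hpv⟩ := MG.rho_matched M i (by omega)
  obtain ⟨q, hq, hqj, hqv⟩ := MG.rho_matched M j (by omega)
  have h2 : p.2 = q.2 := Fin.ext (by omega)
  have := hM.2.2 p hp q hq h2
  exact hij (by rw [← hpi, ← hqj, this])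

lemma MG.arith' : ∀ a b c : Fin 4,
    ¬(a = 0 ∧ b = 0) → ¬(a = 0 ∧ c = 0) → ¬(b = 0 ∧ c = 0) →
    ¬(a = 1 ∧ b = 1) → ¬(a = 1 ∧ c = 1) → ¬(b = 1 ∧ c = 1) →
    ∃ x y z : Fin 3, x ≠ y ∧ x ≠ z ∧ y ≠ z ∧
      ((if (a:ℕ) < (x:ℕ) then 1 else 0) + (if (b:ℕ) < (y:ℕ) then 1 else 0) +
        (if (c:ℕ) < (z:ℕ) then 1 else 0) : ℕ) <
      (if (x:ℕ) < (a:ℕ) then 1 else 0) + (if (y:ℕ) < (b:ℕ) then 1 else 0) +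
        (if (z:ℕ) < (c:ℕ) then 1 else 0) := by decide

lemma MG.arith (a b c : ℕ) (ha : a ≤ 3) (hb : b ≤ 3) (hc : c ≤ 3)
    (h00 : ¬(a = 0 ∧ b = 0)) (h01 : ¬(a = 0 ∧ c = 0)) (h02 : ¬(b = 0 ∧ c = 0))
    (h10 : ¬(a = 1 ∧ b = 1)) (h11 : ¬(a = 1 ∧ c = 1)) (h12 : ¬(b = 1 ∧ c = 1)) :
    ∃ x y z : ℕ, x ≤ 2 ∧ y ≤ 2 ∧ z ≤ 2 ∧ x ≠ y ∧ x ≠ z ∧ y ≠ z ∧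
      ((if a < x then 1 else 0) + (if b < y then 1 else 0) +
        (if c < z then 1 else 0) : ℕ) <
      (if x < a then 1 else 0) + (if y < b then 1 else 0) + (if z < c then 1 else 0) := by
  obtain ⟨x, y, z, h1, h2, h3, h4⟩ :=
    MG.arith' ⟨a, by omega⟩ ⟨b, by omega⟩ ⟨c, by omega⟩
      (by simpa [Fin.ext_iff] using h00) (by simpa [Fin.ext_iff] using h01)
      (by simpa [Fin.ext_iff] using h02) (by simpa [Fin.ext_iff] using h10)
      (by simpa [Fin.ext_iff] using h11) (by simpa [Fin.ext_iff] using h12)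
  exact ⟨x, y, z, by omega, by omega, by omega, fun h => h1 (Fin.ext h),
    fun h => h2 (Fin.ext h), fun h => h3 (Fin.ext h), h4⟩

set_option maxHeartbeats 2000000 in
/-- The unweighted marriage instance with ties given by men
`{m₀, m₁, m₂, d₀, d₁} = Fin 5` (indices 0,1,2 are the real men, 3,4 the dummies) and
women `{w₀, w₁, e₀, e₁, e₂} = Fin 5` (indices 0,1 are `w₀, w₁` and 2,3,4 are
`e₀, e₁, e₂`), full adjacency, where each real man ranks `w₀` at 0, `w₁` at 1 and
all of `e₀, e₁, e₂` at 2 (indifference), the dummy men are indifferent among all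
women, and every woman is indifferent among all men, admits no popular matching. -/
theorem marriage_with_ties_no_popular_matching :
    ∀ M : Finset (Fin 5 × Fin 5), MG.IsMatching Finset.univ M →
      ∃ M' : Finset (Fin 5 × Fin 5), MG.IsMatching Finset.univ M' ∧
        MG.phi (fun _ => (1 : ℝ)) (fun _ => (1 : ℝ))
            (fun (i : Fin 5) (j : Fin 5) => if (i : ℕ) < 3 then min (j : ℕ) 2 else 0)
            (fun (_ : Fin 5) (_ : Fin 5) => 0) M' M >
          MG.phi (fun _ => (1 : ℝ)) (fun _ => (1 : ℝ))
            (fun (i : Fin 5) (j : Fin 5) => if (i : ℕ) < 3 then min (j : ℕ) 2 else 0)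
            (fun (_ : Fin 5) (_ : Fin 5) => 0) M M' := by
  intro M hM
  set rA : Fin 5 → Fin 5 → ℕ :=
    fun (i : Fin 5) (j : Fin 5) => if (i : ℕ) < 3 then min (j : ℕ) 2 else 0 with hrA
  set rB : Fin 5 → Fin 5 → ℕ := fun _ _ => 0 with hrB
  set a := MG.rho M 0 with haa
  set b := MG.rho M 1 with hbb
  set c := MG.rho M 2 with hcc
  obtain ⟨x, y, z, hx2, hy2, hz2, hxy, hxz, hyz, hkey⟩ :=
    MG.arith a b c (MG.rho_le M 0) (MG.rho_le M 1) (MG.rho_le M 2)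
      (fun h => MG.rho_uniq M hM (by decide) (by omega) h.1 h.2)
      (fun h => MG.rho_uniq M hM (by decide) (by omega) h.1 h.2)
      (fun h => MG.rho_uniq M hM (by decide) (by omega) h.1 h.2)
      (fun h => MG.rho_uniq M hM (by decide) (by omega) h.1 h.2)
      (fun h => MG.rho_uniq M hM (by decide) (by omega) h.1 h.2)
      (fun h => MG.rho_uniq M hM (by decide) (by omega) h.1 h.2)
  set wx : Fin 5 := ⟨x, by omega⟩ with hwx
  set wy : Fin 5 := ⟨y, by omega⟩ with hwy
  set wz : Fin 5 := ⟨z, by omega⟩ with hwz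
  set M' : Finset (Fin 5 × Fin 5) :=
    {(0, wx), (1, wy), (2, wz), (3, 3), (4, 4)} with hM'
  have hmem : ∀ p : Fin 5 × Fin 5, p ∈ M' ↔
      p = (0, wx) ∨ p = (1, wy) ∨ p = (2, wz) ∨ p = (3, 3) ∨ p = (4, 4) := by
    intro p; simp [hM']
  have m0 : (0, wx) ∈ M' := (hmem _).2 (Or.inl rfl)
  have m1 : (1, wy) ∈ M' := (hmem _).2 (Or.inr (Or.inl rfl))
  have m2 : (2, wz) ∈ M' := (hmem _).2 (Or.inr (Or.inr (Or.inl rfl)))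
  have m3 : ((3 : Fin 5), (3 : Fin 5)) ∈ M' := (hmem _).2 (Or.inr (Or.inr (Or.inr (Or.inl rfl))))
  have m4 : ((4 : Fin 5), (4 : Fin 5)) ∈ M' := (hmem _).2 (Or.inr (Or.inr (Or.inr (Or.inr rfl))))
  have hvx : (wx : ℕ) = x := rfl
  have hvy : (wy : ℕ) = y := rfl
  have hvz : (wz : ℕ) = z := rfl
  have hv0 : ((0 : Fin 5) : ℕ) = 0 := rfl
  have hv1 : ((1 : Fin 5) : ℕ) = 1 := rfl
  have hv22 : ((2 : Fin 5) : ℕ) = 2 := rfl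
  have hv3 : ((3 : Fin 5) : ℕ) = 3 := rfl
  have hv4 : ((4 : Fin 5) : ℕ) = 4 := rfl
  have hmatch : MG.IsMatching Finset.univ M' := by
    refine ⟨fun p _ => Finset.mem_univ p, ?_, ?_⟩ <;>
    · intro p hp q hq hpq
      rw [hmem] at hp hq
      rcases hp with rfl | rfl | rfl | rfl | rfl <;>
        rcases hq with rfl | rfl | rfl | rfl | rfl <;>
        first
          | rfl
          | (exfalso; have hv := congrArg Fin.val hpq;
             simp only [hvx, hvy, hvz, hv0, hv1, hv22, hv3, hv4] at hv; omega)
  -- characterizations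
  have hQ0 : x < a → MG.PrefersA rA M' M 0 := by
    intro h
    refine ⟨(0, wx), m0, rfl, ?_⟩
    intro q hq hq1
    have hs := MG.rho_spec M hM 0 q hq hq1
    simp only [hrA]
    norm_num [hvx]
    omega
  have hQ1 : y < b → MG.PrefersA rA M' M 1 := by
    intro h
    refine ⟨(1, wy), m1, rfl, ?_⟩
    intro q hq hq1
    have hs := MG.rho_spec M hM 1 q hq hq1
    simp only [hrA]
    norm_num [hvy]
    omega
  have hQ2 : z < c → MG.PrefersA rA M' M 2 := by
    intro h
    refine ⟨(2, wz), m2, rfl, ?_⟩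
    intro q hq hq1
    have hs := MG.rho_spec M hM 2 q hq hq1
    simp only [hrA]
    norm_num [hvz]
    omega
  have hP0 : MG.PrefersA rA M M' 0 → a < x := by
    rintro ⟨p, hp, hp1, hlt⟩
    have h1 := hlt (0, wx) m0 rfl
    have h2 := MG.rho_spec M hM 0 p hp hp1
    simp only [hrA] at h1
    norm_num [hvx] at h1
    omega
  have hP1 : MG.PrefersA rA M M' 1 → b < y := by
    rintro ⟨p, hp, hp1, hlt⟩
    have h1 := hlt (1, wy) m1 rfl
    have h2 := MG.rho_spec M hM 1 p hp hp1
    simp only [hrA] at h1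
    norm_num [hvy] at h1
    omega
  have hP2 : MG.PrefersA rA M M' 2 → c < z := by
    rintro ⟨p, hp, hp1, hlt⟩
    have h1 := hlt (2, wz) m2 rfl
    have h2 := MG.rho_spec M hM 2 p hp hp1
    simp only [hrA] at h1
    norm_num [hvz] at h1
    omega
  have hP3 : ¬ MG.PrefersA rA M M' 3 := by
    rintro ⟨p, hp, hp1, hlt⟩
    have h1 := hlt (3, 3) m3 rfl
    simp only [hrA, hv3] at h1
    norm_num at h1
  have hP4 : ¬ MG.PrefersA rA M M' 4 := by
    rintro ⟨p, hp, hp1, hlt⟩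
    have h1 := hlt (4, 4) m4 rfl
    simp only [hrA, hv4] at h1
    norm_num at h1
  have hcover : ∀ j : Fin 5, ∃ q ∈ M', q.2 = j := by
    intro j
    fin_cases j
    · have h : x = 0 ∨ y = 0 ∨ z = 0 := by omega
      rcases h with h | h | h
      · exact ⟨(0, wx), m0, by simp [hwx, h, Fin.ext_iff]⟩
      · exact ⟨(1, wy), m1, by simp [hwy, h, Fin.ext_iff]⟩
      · exact ⟨(2, wz), m2, by simp [hwz, h, Fin.ext_iff]⟩
    · have h : x = 1 ∨ y = 1 ∨ z = 1 := by omega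
      rcases h with h | h | h
      · exact ⟨(0, wx), m0, by simp [hwx, h, Fin.ext_iff]⟩
      · exact ⟨(1, wy), m1, by simp [hwy, h, Fin.ext_iff]⟩
      · exact ⟨(2, wz), m2, by simp [hwz, h, Fin.ext_iff]⟩
    · have h : x = 2 ∨ y = 2 ∨ z = 2 := by omega
      rcases h with h | h | h
      · exact ⟨(0, wx), m0, by simp [hwx, h, Fin.ext_iff]⟩
      · exact ⟨(1, wy), m1, by simp [hwy, h, Fin.ext_iff]⟩
      · exact ⟨(2, wz), m2, by simp [hwz, h, Fin.ext_iff]⟩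
    · exact ⟨(3, 3), m3, rfl⟩
    · exact ⟨(4, 4), m4, rfl⟩
  have hPw : ∀ j : Fin 5, ¬ MG.PrefersB rB M M' j := by
    rintro j ⟨p, hp, hp2, hlt⟩
    obtain ⟨q, hq, hq2⟩ := hcover j
    have := hlt q hq hq2
    simp [hrB] at this
  refine ⟨M', hmatch, ?_⟩
  have nonneg : ∀ (P : Prop) [Decidable P], (0:ℝ) ≤ (if P then (1:ℝ) else 0) := by
    intro P _; split <;> norm_num
  have hupper : MG.phi (fun _ => (1:ℝ)) (fun _ => (1:ℝ)) rA rB M M' ≤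
      (if a < x then (1:ℝ) else 0) + (if b < y then 1 else 0) + (if c < z then 1 else 0) := by
    rw [MG.phi, Fin.sum_univ_five, Fin.sum_univ_five]
    have t0 : (if MG.PrefersA rA M M' 0 then (1:ℝ) else 0) ≤ (if a < x then 1 else 0) := by
      by_cases h : MG.PrefersA rA M M' 0
      · rw [if_pos h, if_pos (hP0 h)]
      · rw [if_neg h]; exact nonneg _
    have t1 : (if MG.PrefersA rA M M' 1 then (1:ℝ) else 0) ≤ (if b < y then 1 else 0) := by
      by_cases h : MG.PrefersA rA M M' 1
      · rw [if_pos h, if_pos (hP1 h)]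
      · rw [if_neg h]; exact nonneg _
    have t2 : (if MG.PrefersA rA M M' 2 then (1:ℝ) else 0) ≤ (if c < z then 1 else 0) := by
      by_cases h : MG.PrefersA rA M M' 2
      · rw [if_pos h, if_pos (hP2 h)]
      · rw [if_neg h]; exact nonneg _
    rw [if_neg hP3, if_neg hP4, if_neg (hPw 0), if_neg (hPw 1), if_neg (hPw 2),
      if_neg (hPw 3), if_neg (hPw 4)]
    linarith
  have hlower : (if x < a then (1:ℝ) else 0) + (if y < b then 1 else 0) +
      (if z < c then 1 else 0) ≤
      MG.phi (fun _ => (1:ℝ)) (fun _ => (1:ℝ)) rA rB M' M := by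
    rw [MG.phi, Fin.sum_univ_five, Fin.sum_univ_five]
    have t0 : (if x < a then (1:ℝ) else 0) ≤ (if MG.PrefersA rA M' M 0 then 1 else 0) := by
      by_cases h : x < a
      · rw [if_pos h, if_pos (hQ0 h)]
      · rw [if_neg h]; exact nonneg _
    have t1 : (if y < b then (1:ℝ) else 0) ≤ (if MG.PrefersA rA M' M 1 then 1 else 0) := by
      by_cases h : y < b
      · rw [if_pos h, if_pos (hQ1 h)]
      · rw [if_neg h]; exact nonneg _
    have t2 : (if z < c then (1:ℝ) else 0) ≤ (if MG.PrefersA rA M' M 2 then 1 else 0) := by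
      by_cases h : z < c
      · rw [if_pos h, if_pos (hQ2 h)]
      · rw [if_neg h]; exact nonneg _
    have := nonneg (MG.PrefersA rA M' M 3)
    have := nonneg (MG.PrefersA rA M' M 4)
    have := nonneg (MG.PrefersB rB M' M 0)
    have := nonneg (MG.PrefersB rB M' M 1)
    have := nonneg (MG.PrefersB rB M' M 2)
    have := nonneg (MG.PrefersB rB M' M 3)
    have := nonneg (MG.PrefersB rB M' M 4)
    linarith
  have hmid : ((if a < x then (1:ℝ) else 0) + (if b < y then 1 else 0) +
      (if c < z then 1 else 0)) <
      (if x < a then (1:ℝ) else 0) + (if y < b then 1 else 0) + (if z < c then 1 else 0) := by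
    by_cases h1 : a < x <;> by_cases h2 : b < y <;> by_cases h3 : c < z <;>
      by_cases h4 : x < a <;> by_cases h5 : y < b <;> by_cases h6 : z < c <;>
      simp only [if_pos, if_neg, h1, h2, h3, h4, h5, h6, if_true, if_false] at hkey ⊢ <;>
      norm_num at hkey <;> norm_num <;> omega
  linarith
end

section
/- Every roommates instance with unit weights and strict preferences admits a popular winning set of cardinality 2: there exist matchings M₁ and M₂ such that for every matching M', the number of agents that strictly prefer {M₁, M₂} over M' is at least the number of agents that strictly prefer M' over {M₁, M₂}. -/
open scoped Classical

/-- `M` is a matching in the roommates instance on graph `G`: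
a set of edges of `G` in which every agent occurs in at most one edge. -/
def RM.IsMatching {V : Type*} (G : SimpleGraph V) (M : Finset (Sym2 V)) : Prop :=
  (∀ e ∈ M, e ∈ G.edgeSet) ∧ ∀ i j j' : V, s(i, j) ∈ M → s(i, j') ∈ M → j = j'

/-- Agent `i` strictly prefers matching `M` over matching `M'`:
`i` is matched in `M` to some `j` and either `i` is unmatched in `M'`
or matched in `M'` to a strictly worse-ranked partner. -/
def RM.Prefers {V : Type*} (r : V → V → ℕ) (M M' : Finset (Sym2 V)) (i : V) : Prop :=
  ∃ j, s(i, j) ∈ M ∧ ∀ j', s(i, j') ∈ M' → r i j < r i j'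

/-- `φ(M, M')`: total weight of agents strictly preferring `M` over `M'`. -/
noncomputable def RM.phi {V : Type*} [Fintype V] (w : V → ℝ) (r : V → V → ℕ)
    (M M' : Finset (Sym2 V)) : ℝ :=
  ∑ i, if RM.Prefers r M M' i then w i else 0



namespace RMAux

noncomputable section

variable {V : Type*} [Fintype V]

/-- The set of ordered pairs `(u,v)` with `u` adjacent to `v` and `ord u < ord v`. -/
def Eord (G : SimpleGraph V) (ord : V → ℕ) : Finset (V × V) :=
  Finset.univ.filter fun e => G.Adj e.1 e.2 ∧ ord e.1 < ord e.2

lemma mem_Eord {G : SimpleGraph V} {ord : V → ℕ} {e : V × V} :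
    e ∈ Eord G ord ↔ G.Adj e.1 e.2 ∧ ord e.1 < ord e.2 := by
  simp [Eord]

/-- Candidates of `u`: upward neighbours not yet rejected. -/
def cands (G : SimpleGraph V) (ord : V → ℕ) (R : Finset (V × V)) (u : V) : Finset V :=
  Finset.univ.filter fun v => (u, v) ∈ Eord G ord ∧ (u, v) ∉ R

lemma mem_cands {G : SimpleGraph V} {ord : V → ℕ} {R : Finset (V × V)} {u v : V} :
    v ∈ cands G ord R u ↔ (u, v) ∈ Eord G ord ∧ (u, v) ∉ R := by
  simp [cands]

/-- `u`'s current proposal: its best non-rejected upward neighbour. -/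
def prop (G : SimpleGraph V) (r : V → V → ℕ) (ord : V → ℕ) (R : Finset (V × V)) (u : V) :
    Option V :=
  if h : (cands G ord R u).Nonempty then
    some (Finset.exists_min_image (cands G ord R u) (r u) h).choose
  else none

lemma prop_spec {G : SimpleGraph V} {r : V → V → ℕ} {ord : V → ℕ} {R : Finset (V × V)}
    {u v : V} (h : prop G r ord R u = some v) :
    v ∈ cands G ord R u ∧ ∀ w ∈ cands G ord R u, r u v ≤ r u w := by
  unfold prop at h
  split_ifs at h with hne
  · obtain ⟨hmem, hmin⟩ := (Finset.exists_min_image (cands G ord R u) (r u) hne).choose_spec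
    injection h with h
    subst h
    exact ⟨hmem, hmin⟩

lemma prop_total {G : SimpleGraph V} {r : V → V → ℕ} {ord : V → ℕ} {R : Finset (V × V)}
    {u v : V} (h : v ∈ cands G ord R u) : ∃ w, prop G r ord R u = some w := by
  unfold prop
  rw [dif_pos ⟨v, h⟩]
  exact ⟨_, rfl⟩

/-- The rejection operator. -/
def Trej (G : SimpleGraph V) (r : V → V → ℕ) (ord : V → ℕ) (R : Finset (V × V)) :
    Finset (V × V) :=
  (Eord G ord).filter fun e => ∃ u', prop G r ord R u' = some e.2 ∧ r e.2 u' < r e.2 e.1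

lemma mem_Trej {G : SimpleGraph V} {r : V → V → ℕ} {ord : V → ℕ} {R : Finset (V × V)}
    {e : V × V} :
    e ∈ Trej G r ord R ↔
      e ∈ Eord G ord ∧ ∃ u', prop G r ord R u' = some e.2 ∧ r e.2 u' < r e.2 e.1 :=
  Finset.mem_filter

variable {G : SimpleGraph V} {r : V → V → ℕ} {ord : V → ℕ}

lemma adj_of_cands {R : Finset (V × V)} {u v : V} (h : v ∈ cands G ord R u) : G.Adj u v :=
  (mem_Eord.1 (mem_cands.1 h).1).1

lemma prop_persist (hstrict : ∀ i j j', G.Adj i j → G.Adj i j' → r i j = r i j' → j = j')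
    {R R' : Finset (V × V)} (hsub : R ⊆ R') {u v : V}
    (hprop : prop G r ord R u = some v) (hnot : (u, v) ∉ R') :
    prop G r ord R' u = some v := by
  obtain ⟨hvR, hminR⟩ := prop_spec hprop
  have hvmem : v ∈ cands G ord R' u := mem_cands.2 ⟨(mem_cands.1 hvR).1, hnot⟩
  obtain ⟨w, hw⟩ := prop_total (r := r) hvmem
  obtain ⟨hwR', hminR'⟩ := prop_spec hw
  have hsubc : cands G ord R' u ⊆ cands G ord R u := fun x hx =>
    mem_cands.2 ⟨(mem_cands.1 hx).1, fun hm => (mem_cands.1 hx).2 (hsub hm)⟩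
  have h1 : r u v ≤ r u w := hminR w (hsubc hwR')
  have h2 : r u w ≤ r u v := hminR' v hvmem
  have : w = v := hstrict u w v (adj_of_cands hwR') (adj_of_cands hvR) (le_antisymm h2 h1)
  rwa [this] at hw

lemma exists_accepted (hstrict : ∀ i j j', G.Adj i j → G.Adj i j' → r i j = r i j' → j = j')
    {R R' : Finset (V × V)} (hsub : R ⊆ R') (hTR : R' ⊆ Trej G r ord R)
    (n : ℕ) :
    ∀ u₁ v, prop G r ord R u₁ = some v → r v u₁ ≤ n →
      ∃ u₂, prop G r ord R' u₂ = some v ∧ r v u₂ ≤ r v u₁ := by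
  induction n using Nat.strong_induction_on with
  | _ n ih =>
    intro u₁ v h1 hle
    by_cases hmem : (u₁, v) ∈ R'
    · obtain ⟨_, u₃, h3, hlt⟩ := mem_Trej.1 (hTR hmem)
      obtain ⟨u₂, h2, hle2⟩ := ih (r v u₃) (lt_of_lt_of_le hlt hle) u₃ v h3 le_rfl
      exact ⟨u₂, h2, le_trans hle2 (le_of_lt hlt)⟩
    · exact ⟨u₁, prop_persist hstrict hsub h1 hmem, le_rfl⟩

lemma Trej_mono (hstrict : ∀ i j j', G.Adj i j → G.Adj i j' → r i j = r i j' → j = j')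
    {R R' : Finset (V × V)} (hsub : R ⊆ R') (hTR : R' ⊆ Trej G r ord R) :
    Trej G r ord R ⊆ Trej G r ord R' := by
  intro e he
  obtain ⟨heE, u', hu', hlt⟩ := mem_Trej.1 he
  obtain ⟨u₂, h2, hle⟩ := exists_accepted hstrict hsub hTR (r e.2 u') u' e.2 hu' le_rfl
  exact mem_Trej.2 ⟨heE, u₂, h2, lt_of_le_of_lt hle hlt⟩

lemma Trej_subset (R : Finset (V × V)) : Trej G r ord R ⊆ Eord G ord :=
  Finset.filter_subset _ _

lemma exists_fixpoint
    (hstrict : ∀ i j j', G.Adj i j → G.Adj i j' → r i j = r i j' → j = j') :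
    ∃ R : Finset (V × V), Trej G r ord R = R := by
  by_contra hno
  push_neg at hno
  set f : Finset (V × V) → Finset (V × V) := Trej G r ord with hf
  have hchain : ∀ k : ℕ, f^[k] ∅ ⊆ f^[k + 1] ∅ := by
    intro k
    induction k with
    | zero => simp
    | succ k ihk =>
      rw [Function.iterate_succ_apply', Function.iterate_succ_apply']
      exact Trej_mono hstrict ihk (le_of_eq (Function.iterate_succ_apply' f k ∅))
  have hgrow : ∀ k : ℕ, k ≤ (f^[k] ∅).card := by
    intro k
    induction k with
    | zero => simp
    | succ k ihk =>
      have hne : f^[k] ∅ ≠ f^[k + 1] ∅ := by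
        intro heq
        rw [Function.iterate_succ_apply'] at heq
        exact hno _ heq.symm
      have : (f^[k] ∅).card < (f^[k + 1] ∅).card :=
        Finset.card_lt_card (lt_of_le_of_ne (hchain k) hne)
      omega
  have hboundall : ∀ k : ℕ, (f^[k] ∅).card ≤ (Eord G ord).card := by
    intro k
    cases k with
    | zero => simp
    | succ k =>
      rw [Function.iterate_succ_apply']
      exact Finset.card_le_card (Trej_subset _)
  have h1 := hgrow ((Eord G ord).card + 1)
  have h2 := hboundall ((Eord G ord).card + 1)
  omega


lemma a_inj (hstrict : ∀ i j j', G.Adj i j → G.Adj i j' → r i j = r i j' → j = j')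
    {R : Finset (V × V)} (hfix : Trej G r ord R = R) {u u' v : V}
    (h1 : prop G r ord R u = some v) (h2 : prop G r ord R u' = some v) : u = u' := by
  by_contra hne
  have hadj1 : G.Adj u v := adj_of_cands (prop_spec h1).1
  have hadj2 : G.Adj u' v := adj_of_cands (prop_spec h2).1
  have hrne : r v u ≠ r v u' := fun heq => hne (hstrict v u u' hadj1.symm hadj2.symm heq)
  rcases lt_or_gt_of_ne hrne with hlt | hgt
  · have hmem : (u', v) ∈ Trej G r ord R :=
      mem_Trej.2 ⟨(mem_cands.1 (prop_spec h2).1).1, u, h1, hlt⟩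
    rw [hfix] at hmem
    exact (mem_cands.1 (prop_spec h2).1).2 hmem
  · have hmem : (u, v) ∈ Trej G r ord R :=
      mem_Trej.2 ⟨(mem_cands.1 (prop_spec h1).1).1, u', h2, hgt⟩
    rw [hfix] at hmem
    exact (mem_cands.1 (prop_spec h1).1).2 hmem

lemma stab {R : Finset (V × V)} (hfix : Trej G r ord R = R) {u v : V}
    (hadj : G.Adj u v) (hlt : ord u < ord v)
    (henvy : prop G r ord R u = none ∨ ∃ x, prop G r ord R u = some x ∧ r u v < r u x) :
    ∃ u', prop G r ord R u' = some v ∧ r v u' < r v u := by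
  have heE : (u, v) ∈ Eord G ord := mem_Eord.2 ⟨hadj, hlt⟩
  by_cases hmem : (u, v) ∈ R
  · rw [← hfix] at hmem
    obtain ⟨_, u', h', hlt'⟩ := mem_Trej.1 hmem
    exact ⟨u', h', hlt'⟩
  · exfalso
    have hv : v ∈ cands G ord R u := mem_cands.2 ⟨heE, hmem⟩
    obtain ⟨w, hw⟩ := prop_total (r := r) hv
    have hmin := (prop_spec hw).2 v hv
    rcases henvy with h | ⟨x, hx, hxlt⟩
    · rw [h] at hw
      exact absurd hw (by simp)
    · rw [hx] at hw
      injection hw with hw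
      rw [← hw] at hmin
      exact absurd hxlt (not_lt.2 hmin)

/-- Depth of a vertex along the chain of `a`-predecessors. -/
def depth (ord : V → ℕ) (a : V → Option V) (ha : ∀ w u, a w = some u → ord w < ord u)
    (u : V) : ℕ :=
  if h : ∃ w, a w = some u then depth ord a ha h.choose + 1 else 0
termination_by ord u
decreasing_by exact ha _ _ h.choose_spec

lemma depth_succ {a : V → Option V} {ha : ∀ w u, a w = some u → ord w < ord u}
    (hinj : ∀ u u' v, a u = some v → a u' = some v → u = u')
    {w u : V} (hw : a w = some u) :
    depth ord a ha u = depth ord a ha w + 1 := by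
  have hex : ∃ w', a w' = some u := ⟨w, hw⟩
  rw [depth, dif_pos hex]
  have := hex.choose_spec
  rw [hinj _ _ _ this hw]

/-- The two matchings: edges `{u, a u}` split by depth parity. -/
def Mside (ord : V → ℕ) (a : V → Option V)
    (ha : ∀ w u, a w = some u → ord w < ord u) (c : Bool) : Finset (Sym2 V) :=
  (Finset.univ.filter fun u =>
      (a u).isSome ∧ depth ord a ha u % 2 = (if c then 0 else 1)).image
    fun u => s(u, (a u).getD u)

lemma mem_Mside {a : V → Option V} {ha : ∀ w u, a w = some u → ord w < ord u}
    {c : Bool} {e : Sym2 V} :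
    e ∈ Mside ord a ha c ↔
      ∃ u v, a u = some v ∧ depth ord a ha u % 2 = (if c then 0 else 1) ∧ e = s(u, v) := by
  simp only [Mside, Finset.mem_image, Finset.mem_filter, Finset.mem_univ, true_and]
  constructor
  · rintro ⟨u, ⟨hsome, hpar⟩, rfl⟩
    obtain ⟨v, hv⟩ := Option.isSome_iff_exists.1 hsome
    exact ⟨u, v, hv, hpar, by rw [hv, Option.getD_some]⟩
  · rintro ⟨u, v, hv, hpar, rfl⟩
    exact ⟨u, ⟨by simp [hv], hpar⟩, by rw [hv, Option.getD_some]⟩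

end

end RMAux


/-- Every roommates instance with unit weights and strict preferences admits a
popular winning set of cardinality 2: there exist matchings `M₁, M₂` such that for
every matching `M'`, the number of agents strictly preferring `{M₁, M₂}` over `M'`
is at least the number of agents strictly preferring `M'` over `{M₁, M₂}`. -/
theorem roommates_unweighted_strict_popular_dimension_le_two
    {V : Type*} [Fintype V] (G : SimpleGraph V) (r : V → V → ℕ)
    (hstrict : ∀ i j j', G.Adj i j → G.Adj i j' → r i j = r i j' → j = j') :
    ∃ M₁ M₂ : Finset (Sym2 V), RM.IsMatching G M₁ ∧ RM.IsMatching G M₂ ∧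
      ∀ M' : Finset (Sym2 V), RM.IsMatching G M' →
        (Finset.univ.filter fun i =>
            ∃ M ∈ ({M₁, M₂} : Set (Finset (Sym2 V))), RM.Prefers r M M' i).card ≥
          (Finset.univ.filter fun i =>
            ∀ M ∈ ({M₁, M₂} : Set (Finset (Sym2 V))), RM.Prefers r M' M i).card := by
  classical
  set ord : V → ℕ := fun v => ((Fintype.equivFin V) v : ℕ) with hord
  have hordinj : Function.Injective ord := by
    intro x y h
    exact (Fintype.equivFin V).injective (Fin.val_injective h)
  obtain ⟨R, hfix⟩ := RMAux.exists_fixpoint (G := G) (r := r) (ord := ord) hstrict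
  set a : V → Option V := RMAux.prop G r ord R with hadef
  have ha_edge : ∀ u v, a u = some v → G.Adj u v ∧ ord u < ord v := by
    intro u v h
    exact RMAux.mem_Eord.1 (RMAux.mem_cands.1 (RMAux.prop_spec h).1).1
  have ha_lt : ∀ w u, a w = some u → ord w < ord u := fun w u h => (ha_edge w u h).2
  have ha_inj : ∀ u u' v, a u = some v → a u' = some v → u = u' :=
    fun u u' v h1 h2 => RMAux.a_inj hstrict hfix h1 h2
  have hstab : ∀ u v, G.Adj u v → ord u < ord v →
      (a u = none ∨ ∃ x, a u = some x ∧ r u v < r u x) →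
      ∃ u', a u' = some v ∧ r v u' < r v u :=
    fun u v hadj hlt h => RMAux.stab hfix hadj hlt h
  -- the downward partner
  set bb : V → Option V := fun v => if h : ∃ w, a w = some v then some h.choose else none
    with hbbdef
  have hbb_spec : ∀ v w, bb v = some w ↔ a w = some v := by
    intro v w
    constructor
    · intro h
      simp only [hbbdef] at h
      split_ifs at h with hex
      injection h with h
      rw [← h]
      exact hex.choose_spec
    · intro h
      have hex : ∃ w', a w' = some v := ⟨w, h⟩
      simp only [hbbdef, dif_pos hex]
      exact congrArg some (ha_inj _ _ _ hex.choose_spec h)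
  -- the best partner
  set p : V → Option V := fun u =>
    match a u, bb u with
    | none, none => none
    | some x, none => some x
    | none, some y => some y
    | some x, some y => if r u x ≤ r u y then some x else some y
    with hpdef
  have hp_none : ∀ u, p u = none → a u = none ∧ bb u = none := by
    intro u h
    rcases h1 : a u with _ | x
    · rcases h2 : bb u with _ | y
      · exact ⟨rfl, rfl⟩
      · exfalso
        simp only [hpdef, h1, h2] at h
        exact absurd h (by simp)
    · exfalso
      rcases h2 : bb u with _ | y <;> simp only [hpdef, h1, h2] at h
      · exact absurd h (by simp)
      · split_ifs at h
  have hp_le_a : ∀ u x q, a u = some x → p u = some q → r u q ≤ r u x := by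
    intro u x q h1 h2
    rcases h3 : bb u with _ | y <;> simp only [hpdef, h1, h3] at h2
    · injection h2 with h2; subst h2; exact le_rfl
    · split_ifs at h2 with hle
      · injection h2 with h2; subst h2; exact le_rfl
      · injection h2 with h2; subst h2; exact le_of_lt (not_le.1 hle)
  have hp_le_b : ∀ u y q, bb u = some y → p u = some q → r u q ≤ r u y := by
    intro u y q h1 h2
    rcases h3 : a u with _ | x <;> simp only [hpdef, h1, h3] at h2
    · injection h2 with h2; subst h2; exact le_rfl
    · split_ifs at h2 with hle
      · injection h2 with h2; subst h2; exact hle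
      · injection h2 with h2; subst h2; exact le_rfl
  have hp_cases : ∀ u q, p u = some q → a u = some q ∨ bb u = some q := by
    intro u q h
    rcases h1 : a u with _ | x <;> rcases h2 : bb u with _ | y <;>
      simp only [hpdef, h1, h2] at h
    · exact absurd h (by simp)
    · injection h with h; subst h; exact Or.inr rfl
    · injection h with h; subst h; exact Or.inl rfl
    · split_ifs at h
      · injection h with h; subst h; exact Or.inl rfl
      · injection h with h; subst h; exact Or.inr rfl
  have hp_some_of_a : ∀ u x, a u = some x → ∃ q, p u = some q := by
    intro u x h1
    rcases h2 : bb u with _ | y <;> simp only [hpdef, h1, h2]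
    · exact ⟨x, rfl⟩
    · split_ifs <;> exact ⟨_, rfl⟩
  have hp_some_of_b : ∀ u y, bb u = some y → ∃ q, p u = some q := by
    intro u y h2
    rcases h1 : a u with _ | x <;> simp only [hpdef, h1, h2]
    · exact ⟨y, rfl⟩
    · split_ifs <;> exact ⟨_, rfl⟩
  -- bi-stability
  have B : ∀ u v, G.Adj u v →
      (p u = none ∨ ∃ q, p u = some q ∧ r u v < r u q) →
      ∃ y, p v = some y ∧ r v y < r v u := by
    intro u v hadj henvy
    have hordne : ord u ≠ ord v := fun h => hadj.ne (hordinj h)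
    rcases lt_or_gt_of_ne hordne with hlt | hgt
    · -- ord u < ord v : use stability at (u,v)
      have hhyp : a u = none ∨ ∃ x, a u = some x ∧ r u v < r u x := by
        rcases henvy with h | ⟨q, hq, hlt'⟩
        · exact Or.inl (hp_none u h).1
        · rcases h1 : a u with _ | x
          · exact Or.inl rfl
          · exact Or.inr ⟨x, rfl, lt_of_lt_of_le hlt' (hp_le_a u x q h1 hq)⟩
      obtain ⟨u', hu', hlt''⟩ := hstab u v hadj hlt hhyp
      have hbbv : bb v = some u' := (hbb_spec v u').2 hu'
      obtain ⟨y, hy⟩ := hp_some_of_b v u' hbbv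
      exact ⟨y, hy, lt_of_le_of_lt (hp_le_b v u' y hbbv hy) hlt''⟩
    · -- ord v < ord u : contradiction route via stability at (v,u)
      by_contra hcon
      push_neg at hcon
      have hnoenvy : ∀ q', p u = some q' → ¬ r u v < r u q' := by
        intro q' hq' hlt'
        -- derive weak hypothesis for stab at (v,u)
        have hhyp : a v = none ∨ ∃ x, a v = some x ∧ r v u < r v x := by
          rcases h1 : a v with _ | z
          · exact Or.inl rfl
          · refine Or.inr ⟨z, rfl, ?_⟩
            obtain ⟨q, hq⟩ := hp_some_of_a v z h1
            have h2 : r v u ≤ r v q := hcon q hq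
            have h3 : r v q ≤ r v z := hp_le_a v z q h1 hq
            rcases lt_or_eq_of_le (le_trans h2 h3) with h4 | h4
            · exact h4
            · exfalso
              have hz : u = z := hstrict v u z hadj.symm (ha_edge v z h1).1 h4
              subst hz
              have hbbu : bb u = some v := (hbb_spec u v).2 h1
              exact absurd hlt' (not_lt.2 (hp_le_b u v q' hbbu hq'))
        obtain ⟨v', hv', hlt''⟩ := hstab v u hadj.symm hgt hhyp
        have hbbu : bb u = some v' := (hbb_spec u v').2 hv'
        have h5 : r u q' ≤ r u v' := hp_le_b u v' q' hbbu hq'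
        exact absurd hlt' (not_lt.2 (le_trans h5 (le_of_lt hlt'')))
      rcases henvy with h | ⟨q', hq', hlt'⟩
      · -- p u = none but we will derive a contradiction via stab as well
        have hhyp : a v = none ∨ ∃ x, a v = some x ∧ r v u < r v x := by
          rcases h1 : a v with _ | z
          · exact Or.inl rfl
          · refine Or.inr ⟨z, rfl, ?_⟩
            obtain ⟨q, hq⟩ := hp_some_of_a v z h1
            have h2 : r v u ≤ r v q := hcon q hq
            have h3 : r v q ≤ r v z := hp_le_a v z q h1 hq
            rcases lt_or_eq_of_le (le_trans h2 h3) with h4 | h4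
            · exact h4
            · exfalso
              have hz : u = z := hstrict v u z hadj.symm (ha_edge v z h1).1 h4
              subst hz
              have hbbu : bb u = some v := (hbb_spec u v).2 h1
              obtain ⟨q, hq⟩ := hp_some_of_b u v hbbu
              rw [h] at hq
              exact absurd hq (by simp)
        obtain ⟨v', hv', hlt''⟩ := hstab v u hadj.symm hgt hhyp
        have hbbu : bb u = some v' := (hbb_spec u v').2 hv'
        obtain ⟨q, hq⟩ := hp_some_of_b u v' hbbu
        rw [h] at hq
        exact absurd hq (by simp)
      · exact hnoenvy q' hq' hlt'
  -- the two matchings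
  set M₁ : Finset (Sym2 V) := RMAux.Mside ord a ha_lt true with hM1def
  set M₂ : Finset (Sym2 V) := RMAux.Mside ord a ha_lt false with hM2def
  -- membership characterisation of M₁ ∪ M₂
  have hmemM : ∀ i x : V, (s(i, x) ∈ M₁ ∨ s(i, x) ∈ M₂) ↔ (a i = some x ∨ a x = some i) := by
    intro i x
    constructor
    · rintro (h | h) <;>
      · obtain ⟨u, v, hau, hpar, he⟩ := RMAux.mem_Mside.1 h
        rcases Sym2.eq_iff.1 he with ⟨rfl, rfl⟩ | ⟨rfl, rfl⟩
        · exact Or.inl hau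
        · exact Or.inr hau
    · rintro (h | h)
      · by_cases hpar : RMAux.depth ord a ha_lt i % 2 = 0
        · exact Or.inl (RMAux.mem_Mside.2 ⟨i, x, h, by simp [hpar], rfl⟩)
        · refine Or.inr (RMAux.mem_Mside.2 ⟨i, x, h, by simp; omega, rfl⟩)
      · by_cases hpar : RMAux.depth ord a ha_lt x % 2 = 0
        · exact Or.inl (RMAux.mem_Mside.2 ⟨x, i, h, by simp [hpar], Sym2.eq_swap⟩)
        · exact Or.inr (RMAux.mem_Mside.2 ⟨x, i, h, by simp; omega, Sym2.eq_swap⟩)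
  -- both are matchings
  have hmatch : ∀ c : Bool, RM.IsMatching G (RMAux.Mside ord a ha_lt c) := by
    intro c
    constructor
    · intro e he
      obtain ⟨u, v, hau, hpar, rfl⟩ := RMAux.mem_Mside.1 he
      exact (SimpleGraph.mem_edgeSet G).2 (ha_edge u v hau).1
    · intro i j j' h1 h2
      obtain ⟨u1, v1, ha1, hp1, he1⟩ := RMAux.mem_Mside.1 h1
      obtain ⟨u2, v2, ha2, hp2, he2⟩ := RMAux.mem_Mside.1 h2
      rcases Sym2.eq_iff.1 he1 with ⟨rfl, rfl⟩ | ⟨rfl, rfl⟩ <;>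
        rcases Sym2.eq_iff.1 he2 with ⟨h3, rfl⟩ | ⟨h3, rfl⟩
      · -- a i = j, a i = j'
        subst h3
        rw [ha1] at ha2
        injection ha2
      · -- a i = j, a j' = i
        subst h3
        exfalso
        have := RMAux.depth_succ (ord := ord) (ha := ha_lt) ha_inj ha2
        rw [this] at hp1
        rcases c <;> simp at hp1 hp2 <;> omega
      · -- a j = i, a i = j'
        subst h3
        exfalso
        have := RMAux.depth_succ (ord := ord) (ha := ha_lt) ha_inj ha1
        rw [this] at hp2
        rcases c <;> simp at hp1 hp2 <;> omega
      · -- a j = i, a j' = i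
        subst h3
        exact ha_inj _ _ _ ha1 ha2
  refine ⟨M₁, M₂, hmatch true, hmatch false, ?_⟩
  intro M' hM'
  -- realizations of p
  have hp_realize : ∀ j y, p j = some y → s(j, y) ∈ M₁ ∨ s(j, y) ∈ M₂ := by
    intro j y h
    refine (hmemM j y).2 ?_
    rcases hp_cases j y h with h' | h'
    · exact Or.inl h'
    · exact Or.inr ((hbb_spec j y).1 h')
  have hp_best : ∀ i x q, (s(i, x) ∈ M₁ ∨ s(i, x) ∈ M₂) → p i = some q → r i q ≤ r i x := by
    intro i x q hmem hq
    rcases (hmemM i x).1 hmem with h | h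
    · exact hp_le_a i x q h hq
    · exact hp_le_b i x q ((hbb_spec i x).2 h) hq
  -- the injection from the RHS set into the LHS set
  set φ : V → V := fun i => if h : RM.Prefers r M' M₁ i then h.choose else i with hφdef
  apply Finset.card_le_card_of_injOn φ
  · -- maps RHS into LHS
    intro i hi
    rw [Finset.mem_coe, Finset.mem_filter] at hi
    have hi2 := hi.2
    have h1 : RM.Prefers r M' M₁ i := hi2 M₁ (by left; rfl)
    have h2 : RM.Prefers r M' M₂ i := hi2 M₂ (by right; rfl)
    have hφ : φ i = h1.choose := dif_pos h1
    obtain ⟨hjM', hj1⟩ := h1.choose_spec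
    set j := h1.choose with hjdef
    obtain ⟨j₂, hj₂M', hj2⟩ := h2
    have hj₂ : j₂ = j := hM'.2 i j₂ j hj₂M' hjM'
    subst hj₂
    have hadj : G.Adj i j := (SimpleGraph.mem_edgeSet G).1 (hM'.1 _ hjM')
    have henvy : p i = none ∨ ∃ q, p i = some q ∧ r i j < r i q := by
      rcases hq : p i with _ | q
      · exact Or.inl rfl
      · refine Or.inr ⟨q, rfl, ?_⟩
        rcases hp_realize i q hq with hmem | hmem
        · exact hj1 q hmem
        · exact hj2 q hmem
    obtain ⟨y, hy, hylt⟩ := B i j hadj henvy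
    rw [Finset.mem_coe, Finset.mem_filter, hφ]
    refine ⟨Finset.mem_univ _, ?_⟩
    have hji : s(j, i) ∈ M' := by rwa [Sym2.eq_swap] at hjM'
    have hkey : ∀ j'', s(j, j'') ∈ M' → r j y < r j j'' := by
      intro j'' hj''
      have : j'' = i := hM'.2 j j'' i hj'' hji
      subst this
      exact hylt
    rcases hp_realize j y hy with hmem | hmem
    · exact ⟨M₁, Or.inl rfl, y, hmem, hkey⟩
    · exact ⟨M₂, Or.inr rfl, y, hmem, hkey⟩
  · -- injectivity
    intro i₁ hi₁ i₂ hi₂ heq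
    simp only [Finset.coe_filter, Set.mem_setOf_eq] at hi₁ hi₂
    have h1 : RM.Prefers r M' M₁ i₁ := hi₁.2 M₁ (by left; rfl)
    have h2 : RM.Prefers r M' M₁ i₂ := hi₂.2 M₁ (by left; rfl)
    have hφ1 : φ i₁ = h1.choose := dif_pos h1
    have hφ2 : φ i₂ = h2.choose := dif_pos h2
    have hm1 : s(i₁, φ i₁) ∈ M' := by rw [hφ1]; exact h1.choose_spec.1
    have hm2 : s(i₂, φ i₂) ∈ M' := by rw [hφ2]; exact h2.choose_spec.1
    rw [heq] at hm1
    have hm1' : s(φ i₂, i₁) ∈ M' := by rwa [Sym2.eq_swap] at hm1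
    have hm2' : s(φ i₂, i₂) ∈ M' := by rwa [Sym2.eq_swap] at hm2
    exact hM'.2 (φ i₂) i₁ i₂ hm1' hm2'
end

section
/- Let G be a finite simple graph in which every vertex has degree at most 3 and every connected component contains at most one cycle (equivalently, each connected component has at most as many edges as vertices). Then the edge set of G can be partitioned into three matchings M₁, M₂, M₃; equivalently, G admits a proper 3-edge-colouring. -/
open scoped Classical

section AuxThreeEdgeColouring

open Finset

variable {V : Type*} [Fintype V] [DecidableEq V]

/-- Per-component handshake lemma. -/
lemma aux_handshake (G : SimpleGraph V) [DecidableRel G.Adj] (c : G.ConnectedComponent) :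
    ∑ v ∈ Finset.univ.filter (fun v => G.connectedComponentMk v = c), G.degree v
      = 2 * (G.edgeFinset.filter fun e => ∀ v ∈ e, G.connectedComponentMk v = c).card := by
  classical
  have hdeg : ∀ v : V, G.degree v = (G.edgeFinset.filter fun e => v ∈ e).card := by
    intro v
    rw [← SimpleGraph.card_incidenceFinset_eq_degree, SimpleGraph.incidenceFinset_eq_filter]
  calc
    ∑ v ∈ Finset.univ.filter (fun v => G.connectedComponentMk v = c), G.degree v
        = ∑ v ∈ Finset.univ.filter (fun v => G.connectedComponentMk v = c),
            ∑ e ∈ G.edgeFinset, (if v ∈ e then 1 else 0) := by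
          refine Finset.sum_congr rfl fun v _ => ?_
          rw [hdeg v, Finset.card_filter]
    _ = ∑ e ∈ G.edgeFinset,
          ∑ v ∈ Finset.univ.filter (fun v => G.connectedComponentMk v = c),
            (if v ∈ e then 1 else 0) := Finset.sum_comm
    _ = ∑ e ∈ G.edgeFinset, (if (∀ v ∈ e, G.connectedComponentMk v = c) then 2 else 0) := by
          refine Finset.sum_congr rfl fun e he => ?_
          induction e using Sym2.ind with
          | _ x y =>
            have hadj : G.Adj x y := by
              rw [SimpleGraph.mem_edgeFinset] at he; exact he
            have hxy : x ≠ y := hadj.ne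
            have hcc : G.connectedComponentMk x = G.connectedComponentMk y :=
              SimpleGraph.ConnectedComponent.sound hadj.reachable
            rw [← Finset.card_filter]
            by_cases hc : G.connectedComponentMk x = c
            · have hcond : ∀ v ∈ s(x, y), G.connectedComponentMk v = c := by
                intro v hv
                rcases Sym2.mem_iff.mp hv with rfl | rfl
                · exact hc
                · exact hcc ▸ hc
              rw [if_pos hcond]
              have hset : (Finset.univ.filter (fun v => G.connectedComponentMk v = c)).filter
                  (fun v => v ∈ s(x, y)) = {x, y} := by
                ext v
                simp only [Finset.mem_filter, Finset.mem_univ, true_and, Sym2.mem_iff,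
                  Finset.mem_insert, Finset.mem_singleton]
                constructor
                · rintro ⟨-, h⟩; exact h
                · rintro (rfl | rfl)
                  · exact ⟨hc, Or.inl rfl⟩
                  · exact ⟨hcc ▸ hc, Or.inr rfl⟩
              rw [hset, Finset.card_pair hxy]
            · have hcond : ¬ ∀ v ∈ s(x, y), G.connectedComponentMk v = c := by
                intro h; exact hc (h x (Sym2.mem_iff.mpr (Or.inl rfl)))
              rw [if_neg hcond]
              have hset : (Finset.univ.filter (fun v => G.connectedComponentMk v = c)).filter
                  (fun v => v ∈ s(x, y)) = ∅ := by
                ext v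
                simp only [Finset.mem_filter, Finset.mem_univ, true_and, Sym2.mem_iff,
                  Finset.notMem_empty, iff_false, not_and]
                rintro h (rfl | rfl)
                · exact hc h
                · exact hc (hcc.trans h)
              rw [hset, Finset.card_empty]
    _ = 2 * (G.edgeFinset.filter fun e => ∀ v ∈ e, G.connectedComponentMk v = c).card := by
          rw [Finset.card_filter, Finset.mul_sum]
          refine Finset.sum_congr rfl fun e _ => ?_
          split <;> simp

/-- Deleting one edge: every reachability statement survives up to ending at `a` or `b`. -/
lemma aux_reach_delete (G : SimpleGraph V) (a b : V) {v w : V} (h : G.Reachable v w) :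
    (G.deleteEdges {s(a,b)}).Reachable v w ∨ (G.deleteEdges {s(a,b)}).Reachable v a ∨
      (G.deleteEdges {s(a,b)}).Reachable v b := by
  obtain ⟨p⟩ := h
  induction p with
  | nil => exact Or.inl (SimpleGraph.Reachable.refl _)
  | @cons x u w hadj p ih =>
    by_cases he : s(x, u) = s(a, b)
    · rcases Sym2.eq_iff.mp he with ⟨rfl, rfl⟩ | ⟨rfl, rfl⟩
      · exact Or.inr (Or.inl (SimpleGraph.Reachable.refl _))
      · exact Or.inr (Or.inr (SimpleGraph.Reachable.refl _))
    · have hadj' : (G.deleteEdges {s(a,b)}).Adj x u := by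
        rw [SimpleGraph.deleteEdges_adj]
        exact ⟨hadj, by simpa using he⟩
      rcases ih with h' | h' | h'
      · exact Or.inl (hadj'.reachable.trans h')
      · exact Or.inr (Or.inl (hadj'.reachable.trans h'))
      · exact Or.inr (Or.inr (hadj'.reachable.trans h'))

lemma aux_reach_isolated (G : SimpleGraph V) [DecidableRel G.Adj] {a w : V}
    (h : G.degree a = 0) (hr : G.Reachable a w) : a = w := by
  obtain ⟨p⟩ := hr
  cases p with
  | nil => rfl
  | cons hadj p =>
    exfalso
    have : _ ∈ G.neighborFinset a := (SimpleGraph.mem_neighborFinset _ _ _).mpr hadj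
    rw [← SimpleGraph.card_neighborFinset_eq_degree] at h
    simp [Finset.card_eq_zero.mp h] at this

lemma aux_degree_pos (G : SimpleGraph V) [DecidableRel G.Adj] {v w : V}
    (hr : G.Reachable v w) (hne : v ≠ w) : 1 ≤ G.degree v := by
  obtain ⟨p⟩ := hr
  cases p with
  | nil => exact absurd rfl hne
  | cons hadj p =>
    rw [← SimpleGraph.card_neighborFinset_eq_degree]
    exact Finset.card_pos.mpr ⟨_, (SimpleGraph.mem_neighborFinset _ _ _).mpr hadj⟩

lemma aux_nbr_delete_eq (G : SimpleGraph V) [DecidableRel G.Adj] (a b : V)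
    [inst' : DecidableRel (G.deleteEdges {s(a,b)}).Adj] {v : V} (hv : v ≠ a) (hv' : v ≠ b) :
    (G.deleteEdges {s(a,b)}).neighborFinset v = G.neighborFinset v := by
  ext w
  simp only [SimpleGraph.mem_neighborFinset, SimpleGraph.deleteEdges_adj, Set.mem_singleton_iff,
    and_iff_left_iff_imp]
  intro _ hvw
  rcases Sym2.eq_iff.mp hvw with ⟨rfl, rfl⟩ | ⟨rfl, rfl⟩
  · exact hv rfl
  · exact hv' rfl

lemma aux_nbr_delete_self (G : SimpleGraph V) [DecidableRel G.Adj] (a b : V)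
    [inst' : DecidableRel (G.deleteEdges {s(a,b)}).Adj] :
    (G.deleteEdges {s(a,b)}).neighborFinset a = (G.neighborFinset a).erase b := by
  ext w
  simp only [SimpleGraph.mem_neighborFinset, SimpleGraph.deleteEdges_adj, Set.mem_singleton_iff,
    Finset.mem_erase]
  constructor
  · rintro ⟨h1, h2⟩
    refine ⟨fun hw => h2 ?_, h1⟩
    subst hw; rfl
  · rintro ⟨h1, h2⟩
    exact ⟨h2, fun hw => h1 (Sym2.congr_right.mp hw)⟩

lemma aux_deg_delete_le (G : SimpleGraph V) [DecidableRel G.Adj] (a b : V)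
    [inst' : DecidableRel (G.deleteEdges {s(a,b)}).Adj] (v : V) :
    (G.deleteEdges {s(a,b)}).degree v ≤ G.degree v := by
  rw [← SimpleGraph.card_neighborFinset_eq_degree, ← SimpleGraph.card_neighborFinset_eq_degree]
  refine Finset.card_le_card fun w hw => ?_
  rw [SimpleGraph.mem_neighborFinset] at *
  exact ((SimpleGraph.deleteEdges_adj).mp hw).1

lemma aux_deg_delete_self (G : SimpleGraph V) [DecidableRel G.Adj] {a b : V} (hab : G.Adj a b)
    [inst' : DecidableRel (G.deleteEdges {s(a,b)}).Adj] :
    (G.deleteEdges {s(a,b)}).degree a = G.degree a - 1 := by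
  rw [← SimpleGraph.card_neighborFinset_eq_degree, ← SimpleGraph.card_neighborFinset_eq_degree,
    aux_nbr_delete_self G a b,
    Finset.card_erase_of_mem ((SimpleGraph.mem_neighborFinset _ _ _).mpr hab)]

lemma aux_exists_good_edge (G : SimpleGraph V) [DecidableRel G.Adj]
    (hcomp : ∀ c : G.ConnectedComponent,
      (G.edgeFinset.filter fun e => ∀ v ∈ e, G.connectedComponentMk v = c).card ≤
        (Finset.univ.filter fun v : V => G.connectedComponentMk v = c).card)
    (hne : G.edgeFinset.Nonempty) :
    ∃ a b, G.Adj a b ∧ (G.degree a = 1 ∨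
      ∀ v, G.connectedComponentMk v = G.connectedComponentMk a → G.degree v = 2) := by
  by_cases h1 : ∃ x, G.degree x = 1
  · obtain ⟨x, hx⟩ := h1
    have : (G.neighborFinset x).Nonempty := by
      rw [← Finset.card_pos, SimpleGraph.card_neighborFinset_eq_degree, hx]; norm_num
    obtain ⟨y, hy⟩ := this
    exact ⟨x, y, (SimpleGraph.mem_neighborFinset _ _ _).mp hy, Or.inl hx⟩
  · push_neg at h1
    obtain ⟨e, he⟩ := hne
    induction e using Sym2.ind with
    | _ a b =>
      have hadj : G.Adj a b := SimpleGraph.mem_edgeFinset.mp he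
      set c := G.connectedComponentMk a with hc
      set Vc := Finset.univ.filter (fun v : V => G.connectedComponentMk v = c) with hVc
      have hge2 : ∀ v ∈ Vc, 2 ≤ G.degree v := by
        intro v hv
        rw [hVc, Finset.mem_filter] at hv
        have hr : G.Reachable v a := SimpleGraph.ConnectedComponent.exact hv.2
        have hposa : 1 ≤ G.degree a := by
          refine Nat.one_le_iff_ne_zero.mpr fun h0 => ?_
          have hb : a = b := aux_reach_isolated G h0 hadj.reachable
          have := hadj
          rw [hb] at this
          exact G.loopless.irrefl b this
        have hpos : 1 ≤ G.degree v := by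
          by_cases hva : v = a
          · rw [hva]; exact hposa
          · exact aux_degree_pos G hr hva
        have := h1 v
        omega
      have hsum : ∑ v ∈ Vc, G.degree v = 2 *
          (G.edgeFinset.filter fun e => ∀ v ∈ e, G.connectedComponentMk v = c).card :=
        aux_handshake G c
      have hub : ∑ v ∈ Vc, G.degree v ≤ 2 * Vc.card := by
        rw [hsum]
        exact Nat.mul_le_mul_left 2 (hcomp c)
      have hlb : 2 * Vc.card ≤ ∑ v ∈ Vc, G.degree v := by
        calc 2 * Vc.card = Vc.card • 2 := by rw [smul_eq_mul, mul_comm]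
        _ ≤ ∑ v ∈ Vc, G.degree v := Finset.card_nsmul_le_sum Vc _ 2 hge2
      have heq : ∑ v ∈ Vc, G.degree v = 2 * Vc.card := le_antisymm hub hlb
      refine ⟨a, b, hadj, Or.inr fun v hv => ?_⟩
      by_contra hv2
      have hvmem : v ∈ Vc := by rw [hVc, Finset.mem_filter]; exact ⟨Finset.mem_univ _, hv⟩
      have h3 : 3 ≤ G.degree v := by have := hge2 v hvmem; have := h1 v; omega
      have hsplit : G.degree v + ∑ w ∈ Vc.erase v, G.degree w = ∑ w ∈ Vc, G.degree w :=
        Finset.add_sum_erase Vc (fun w => G.degree w) hvmem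
      have hlb2 : 2 * (Vc.erase v).card ≤ ∑ w ∈ Vc.erase v, G.degree w := by
        calc 2 * (Vc.erase v).card = (Vc.erase v).card • 2 := by rw [smul_eq_mul, mul_comm]
        _ ≤ _ := Finset.card_nsmul_le_sum _ _ 2 fun w hw => hge2 w (Finset.mem_of_mem_erase hw)
      have hcard : (Vc.erase v).card = Vc.card - 1 := Finset.card_erase_of_mem hvmem
      have hpos : 1 ≤ Vc.card := Finset.card_pos.mpr ⟨v, hvmem⟩
      omega

lemma aux_B2 (G : SimpleGraph V) [DecidableRel G.Adj] {a b : V} (hab : G.Adj a b)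
    (hreg : ∀ v, G.connectedComponentMk v = G.connectedComponentMk a → G.degree v = 2)
    [inst' : DecidableRel (G.deleteEdges {s(a,b)}).Adj] {u : V}
    (hua : (G.deleteEdges {s(a,b)}).Reachable u a)
    (hub : ¬ (G.deleteEdges {s(a,b)}).Reachable u b) : False := by
  set G' := G.deleteEdges {s(a,b)} with hG'
  set V' := Finset.univ.filter
    (fun v : V => G'.connectedComponentMk v = G'.connectedComponentMk u) with hV'
  have hhs := aux_handshake G' (G'.connectedComponentMk u)
  have ha' : a ∈ V' := by
    rw [hV', Finset.mem_filter]
    exact ⟨Finset.mem_univ _, SimpleGraph.ConnectedComponent.sound hua.symm⟩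
  have hbn : b ∉ V' := by
    rw [hV', Finset.mem_filter]
    rintro ⟨-, h⟩
    exact hub (SimpleGraph.ConnectedComponent.exact h).symm
  have hdeg' : ∀ v ∈ V', G'.degree v = if v = a then 1 else 2 := by
    intro v hv
    rw [hV', Finset.mem_filter] at hv
    have hru : G'.Reachable v u := SimpleGraph.ConnectedComponent.exact hv.2
    have hra : G.Reachable v a := (hru.trans hua).mono (G.deleteEdges_le _)
    have hd2 : G.degree v = 2 := hreg v (SimpleGraph.ConnectedComponent.sound hra)
    by_cases hva : v = a
    · rw [if_pos hva, hva, aux_deg_delete_self G hab, hreg a rfl]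
    · rw [if_neg hva]
      have hvb : v ≠ b := by
        rintro rfl
        exact hbn (by rw [hV', Finset.mem_filter]; exact ⟨Finset.mem_univ _, hv.2⟩)
      rw [← SimpleGraph.card_neighborFinset_eq_degree, aux_nbr_delete_eq G a b hva hvb,
        SimpleGraph.card_neighborFinset_eq_degree, hd2]
  have hsplit : G'.degree a + ∑ v ∈ V'.erase a, G'.degree v = ∑ v ∈ V', G'.degree v :=
    Finset.add_sum_erase V' (fun v => G'.degree v) ha'
  have herase : ∑ v ∈ V'.erase a, G'.degree v = 2 * (V'.erase a).card := by
    rw [Finset.sum_congr rfl fun v hv => ?_, Finset.sum_const, smul_eq_mul, mul_comm]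
    rw [hdeg' v (Finset.mem_of_mem_erase hv), if_neg (Finset.ne_of_mem_erase hv)]
  have hdega : G'.degree a = 1 := by rw [hdeg' a ha', if_pos rfl]
  have hcard : (V'.erase a).card = V'.card - 1 := Finset.card_erase_of_mem ha'
  have hpos : 1 ≤ V'.card := Finset.card_pos.mpr ⟨a, ha'⟩
  have hkey : 2 * (G'.edgeFinset.filter fun e => ∀ v ∈ e,
      G'.connectedComponentMk v = G'.connectedComponentMk u).card = 1 + 2 * (V'.card - 1) := by
    rw [← hhs, ← hsplit, hdega, herase, hcard]
  omega

lemma aux_B2' (G : SimpleGraph V) [DecidableRel G.Adj] {a b : V} (hab : G.Adj a b)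
    (hreg : ∀ v, G.connectedComponentMk v = G.connectedComponentMk a → G.degree v = 2)
    [inst' : DecidableRel (G.deleteEdges {s(a,b)}).Adj] {u : V}
    (hua : ¬ (G.deleteEdges {s(a,b)}).Reachable u a)
    (hub : (G.deleteEdges {s(a,b)}).Reachable u b) : False := by
  have h2 : G.deleteEdges {s(b,a)} = G.deleteEdges {s(a,b)} := by
    rw [Sym2.eq_swap]
  have hreg' : ∀ v, G.connectedComponentMk v = G.connectedComponentMk b → G.degree v = 2 :=
    fun v hv => hreg v (hv.trans (SimpleGraph.ConnectedComponent.sound hab.reachable.symm))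
  exact aux_B2 G hab.symm hreg' (inst' := h2 ▸ inst') (h2 ▸ hub) (h2 ▸ hua)

lemma aux_hcomp_delete (G : SimpleGraph V) [DecidableRel G.Adj] {a b : V} (hab : G.Adj a b)
    (hP : G.degree a = 1 ∨
      ∀ v, G.connectedComponentMk v = G.connectedComponentMk a → G.degree v = 2)
    (hcomp : ∀ c : G.ConnectedComponent,
      (G.edgeFinset.filter fun e => ∀ v ∈ e, G.connectedComponentMk v = c).card ≤
        (Finset.univ.filter fun v : V => G.connectedComponentMk v = c).card)
    [inst' : DecidableRel (G.deleteEdges {s(a,b)}).Adj] :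
    ∀ c' : (G.deleteEdges {s(a,b)}).ConnectedComponent,
      ((G.deleteEdges {s(a,b)}).edgeFinset.filter
          fun e => ∀ v ∈ e, (G.deleteEdges {s(a,b)}).connectedComponentMk v = c').card ≤
        (Finset.univ.filter
          fun v : V => (G.deleteEdges {s(a,b)}).connectedComponentMk v = c').card := by
  intro c'
  induction c' using SimpleGraph.ConnectedComponent.ind with
  | _ u =>
  have hmono : ∀ {v w : V}, (G.deleteEdges {s(a,b)}).Reachable v w → G.Reachable v w :=
    fun h => h.mono (G.deleteEdges_le _)
  have hE' : (G.deleteEdges {s(a,b)}).edgeFinset = G.edgeFinset.erase s(a,b) := by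
    ext f
    rw [Finset.mem_erase, SimpleGraph.mem_edgeFinset, SimpleGraph.mem_edgeFinset,
      SimpleGraph.edgeSet_deleteEdges]
    simp only [Set.mem_diff, Set.mem_singleton_iff]
    tauto
  -- the set of edges of (G.deleteEdges {s(a,b)}) inside the (G.deleteEdges {s(a,b)})-component of u is contained in the set of
  -- edges of G inside the G-component of u, minus the deleted edge
  have hsub : ((G.deleteEdges {s(a,b)}).edgeFinset.filter
        fun e => ∀ v ∈ e, (G.deleteEdges {s(a,b)}).connectedComponentMk v = (G.deleteEdges {s(a,b)}).connectedComponentMk u) ⊆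
      ((G.edgeFinset.filter
        fun e => ∀ v ∈ e, G.connectedComponentMk v = G.connectedComponentMk u).erase s(a,b)) := by
    intro f hf
    rw [Finset.mem_filter] at hf
    obtain ⟨hfe, hfc⟩ := hf
    rw [hE', Finset.mem_erase] at hfe
    rw [Finset.mem_erase, Finset.mem_filter]
    exact ⟨hfe.1, hfe.2, fun v hv => SimpleGraph.ConnectedComponent.sound
      (hmono (SimpleGraph.ConnectedComponent.exact (hfc v hv)))⟩
  have hsub' : ((G.deleteEdges {s(a,b)}).edgeFinset.filter
        fun e => ∀ v ∈ e, (G.deleteEdges {s(a,b)}).connectedComponentMk v = (G.deleteEdges {s(a,b)}).connectedComponentMk u) ⊆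
      (G.edgeFinset.filter
        fun e => ∀ v ∈ e, G.connectedComponentMk v = G.connectedComponentMk u) :=
    hsub.trans (Finset.erase_subset _ _)
  by_cases hua : (G.deleteEdges {s(a,b)}).Reachable u a
  · by_cases hub : (G.deleteEdges {s(a,b)}).Reachable u b
    · -- u reaches both endpoints : the component is unchanged as a vertex set
      have hvx : ∀ v : V, (G.deleteEdges {s(a,b)}).connectedComponentMk v = (G.deleteEdges {s(a,b)}).connectedComponentMk u ↔
          G.connectedComponentMk v = G.connectedComponentMk u := by
        intro v
        constructor
        · intro h
          exact SimpleGraph.ConnectedComponent.sound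
            (hmono (SimpleGraph.ConnectedComponent.exact h))
        · intro h
          have hr : G.Reachable v u := SimpleGraph.ConnectedComponent.exact h
          rcases aux_reach_delete G a b hr with h' | h' | h'
          · exact SimpleGraph.ConnectedComponent.sound h'
          · exact SimpleGraph.ConnectedComponent.sound (h'.trans hua.symm)
          · exact SimpleGraph.ConnectedComponent.sound (h'.trans hub.symm)
      have hV : (Finset.univ.filter
            fun v : V => (G.deleteEdges {s(a,b)}).connectedComponentMk v = (G.deleteEdges {s(a,b)}).connectedComponentMk u) =
          (Finset.univ.filter
            fun v : V => G.connectedComponentMk v = G.connectedComponentMk u) := by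
        ext v; simp only [Finset.mem_filter, Finset.mem_univ, true_and]; exact hvx v
      rw [hV]
      calc _ ≤ (G.edgeFinset.filter
            fun e => ∀ v ∈ e, G.connectedComponentMk v = G.connectedComponentMk u).card :=
            Finset.card_le_card hsub'
        _ ≤ _ := hcomp _
    · -- u reaches a but not b
      rcases hP with hd1 | hreg
      · -- a is a pendant vertex, so its (G.deleteEdges {s(a,b)})-component is a single vertex
        have hd0 : (G.deleteEdges {s(a,b)}).degree a = 0 := by
          have h := aux_deg_delete_self G hab
          rw [hd1] at h
          simpa using h
        have hiso : ∀ v : V, (G.deleteEdges {s(a,b)}).Reachable a v → a = v := fun v h => aux_reach_isolated (G.deleteEdges {s(a,b)}) hd0 h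
        have hempty : ((G.deleteEdges {s(a,b)}).edgeFinset.filter
            fun e => ∀ v ∈ e, (G.deleteEdges {s(a,b)}).connectedComponentMk v = (G.deleteEdges {s(a,b)}).connectedComponentMk u) = ∅ := by
          rw [Finset.eq_empty_iff_forall_notMem]
          intro f hf
          rw [Finset.mem_filter] at hf
          obtain ⟨hfe, hfc⟩ := hf
          induction f using Sym2.ind with
          | _ x y =>
            have hadj : (G.deleteEdges {s(a,b)}).Adj x y := SimpleGraph.mem_edgeFinset.mp hfe
            have hx : (G.deleteEdges {s(a,b)}).Reachable x u := SimpleGraph.ConnectedComponent.exact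
              (hfc x (Sym2.mem_iff.mpr (Or.inl rfl)))
            have hax : a = x := hiso x (hua.symm.trans hx.symm)
            have hy : (G.deleteEdges {s(a,b)}).Reachable y u := SimpleGraph.ConnectedComponent.exact
              (hfc y (Sym2.mem_iff.mpr (Or.inr rfl)))
            have hay : a = y := hiso y (hua.symm.trans hy.symm)
            rw [← hax, ← hay] at hadj
            exact (G.deleteEdges {s(a,b)}).loopless.irrefl a hadj
        rw [hempty]
        simp
      · exact absurd (aux_B2 G hab hreg hua hub) not_false
  · by_cases hub : (G.deleteEdges {s(a,b)}).Reachable u b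
    · -- u reaches b but not a
      rcases hP with hd1 | hreg
      · -- pendant case : component is the old component minus the vertex a
        have hd0 : (G.deleteEdges {s(a,b)}).degree a = 0 := by
          have h := aux_deg_delete_self G hab
          rw [hd1] at h
          simpa using h
        have hiso : ∀ v : V, (G.deleteEdges {s(a,b)}).Reachable a v → a = v := fun v h => aux_reach_isolated (G.deleteEdges {s(a,b)}) hd0 h
        have hamem : a ∈ (Finset.univ.filter
            fun v : V => G.connectedComponentMk v = G.connectedComponentMk u) := by
          rw [Finset.mem_filter]
          exact ⟨Finset.mem_univ _,
            SimpleGraph.ConnectedComponent.sound (hab.reachable.trans (hmono hub).symm)⟩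
        have hV : (Finset.univ.filter
              fun v : V => (G.deleteEdges {s(a,b)}).connectedComponentMk v = (G.deleteEdges {s(a,b)}).connectedComponentMk u) =
            (Finset.univ.filter
              fun v : V => G.connectedComponentMk v = G.connectedComponentMk u).erase a := by
          ext v
          simp only [Finset.mem_filter, Finset.mem_univ, true_and, Finset.mem_erase]
          constructor
          · intro h
            have hr : (G.deleteEdges {s(a,b)}).Reachable v u := SimpleGraph.ConnectedComponent.exact h
            refine ⟨fun hva => ?_, SimpleGraph.ConnectedComponent.sound (hmono hr)⟩
            subst hva
            exact hua hr.symm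
          · rintro ⟨hva, h⟩
            have hr : G.Reachable v u := SimpleGraph.ConnectedComponent.exact h
            rcases aux_reach_delete G a b hr with h' | h' | h'
            · exact SimpleGraph.ConnectedComponent.sound h'
            · exact absurd (hiso v h'.symm) (Ne.symm hva)
            · exact SimpleGraph.ConnectedComponent.sound (h'.trans hub.symm)
        rw [hV]
        have hemem : s(a,b) ∈ (G.edgeFinset.filter
            fun e => ∀ v ∈ e, G.connectedComponentMk v = G.connectedComponentMk u) := by
          rw [Finset.mem_filter]
          refine ⟨SimpleGraph.mem_edgeFinset.mpr hab, fun v hv => ?_⟩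
          rcases Sym2.mem_iff.mp hv with rfl | rfl
          · exact SimpleGraph.ConnectedComponent.sound (hab.reachable.trans (hmono hub).symm)
          · exact SimpleGraph.ConnectedComponent.sound (hmono hub).symm
        calc _ ≤ ((G.edgeFinset.filter
              fun e => ∀ v ∈ e, G.connectedComponentMk v = G.connectedComponentMk u).erase
                s(a,b)).card := Finset.card_le_card hsub
          _ = (G.edgeFinset.filter
              fun e => ∀ v ∈ e, G.connectedComponentMk v = G.connectedComponentMk u).card - 1 :=
            Finset.card_erase_of_mem hemem
          _ ≤ (Finset.univ.filter
              fun v : V => G.connectedComponentMk v = G.connectedComponentMk u).card - 1 :=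
            Nat.sub_le_sub_right (hcomp _) 1
          _ = ((Finset.univ.filter
              fun v : V => G.connectedComponentMk v = G.connectedComponentMk u).erase a).card :=
            (Finset.card_erase_of_mem hamem).symm
      · exact absurd (aux_B2' G hab hreg hua hub) not_false
    · -- u reaches neither a nor b : component untouched
      have hvx : ∀ v : V, (G.deleteEdges {s(a,b)}).connectedComponentMk v = (G.deleteEdges {s(a,b)}).connectedComponentMk u ↔
          G.connectedComponentMk v = G.connectedComponentMk u := by
        intro v
        constructor
        · intro h
          exact SimpleGraph.ConnectedComponent.sound
            (hmono (SimpleGraph.ConnectedComponent.exact h))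
        · intro h
          have hr : G.Reachable v u := SimpleGraph.ConnectedComponent.exact h
          rcases aux_reach_delete G a b hr with h' | h' | h'
          · exact SimpleGraph.ConnectedComponent.sound h'
          · -- then u would G-reach a, hence (G.deleteEdges {s(a,b)})-reach a or b, contradiction
            exfalso
            have : G.Reachable u a := hr.symm.trans (hmono h')
            rcases aux_reach_delete G a b this with h'' | h'' | h''
            · exact hua h''
            · exact hua h''
            · exact hub h''
          · exfalso
            have : G.Reachable u b := hr.symm.trans (hmono h')
            rcases aux_reach_delete G a b this with h'' | h'' | h''
            · exact hub h''
            · exact hua h''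
            · exact hub h''
      have hV : (Finset.univ.filter
            fun v : V => (G.deleteEdges {s(a,b)}).connectedComponentMk v = (G.deleteEdges {s(a,b)}).connectedComponentMk u) =
          (Finset.univ.filter
            fun v : V => G.connectedComponentMk v = G.connectedComponentMk u) := by
        ext v; simp only [Finset.mem_filter, Finset.mem_univ, true_and]; exact hvx v
      rw [hV]
      calc _ ≤ (G.edgeFinset.filter
            fun e => ∀ v ∈ e, G.connectedComponentMk v = G.connectedComponentMk u).card :=
            Finset.card_le_card hsub'
        _ ≤ _ := hcomp _

lemma aux_edge_delete (G : SimpleGraph V) [DecidableRel G.Adj] (a b : V)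
    [inst' : DecidableRel (G.deleteEdges {s(a,b)}).Adj] :
    (G.deleteEdges {s(a,b)}).edgeFinset = G.edgeFinset.erase s(a,b) := by
  ext f
  rw [Finset.mem_erase, SimpleGraph.mem_edgeFinset, SimpleGraph.mem_edgeFinset,
    SimpleGraph.edgeSet_deleteEdges]
  simp only [Set.mem_diff, Set.mem_singleton_iff]
  tauto

lemma aux_deg_delete_snd (G : SimpleGraph V) [DecidableRel G.Adj] {a b : V} (hab : G.Adj a b)
    [inst' : DecidableRel (G.deleteEdges {s(a,b)}).Adj] :
    (G.deleteEdges {s(a,b)}).degree b = G.degree b - 1 := by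
  have hnbr : (G.deleteEdges {s(a,b)}).neighborFinset b = (G.neighborFinset b).erase a := by
    ext w
    simp only [SimpleGraph.mem_neighborFinset, SimpleGraph.deleteEdges_adj,
      Set.mem_singleton_iff, Finset.mem_erase]
    constructor
    · rintro ⟨h1, h2⟩
      refine ⟨fun hw => h2 ?_, h1⟩
      subst hw
      rw [Sym2.eq_swap]
    · rintro ⟨h1, h2⟩
      refine ⟨h2, fun hw => ?_⟩
      rcases Sym2.eq_iff.mp hw with ⟨hba, hwb⟩ | ⟨-, hwa⟩
      · rw [hwb] at h2; exact G.loopless.irrefl b h2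
      · exact h1 hwa
  rw [← SimpleGraph.card_neighborFinset_eq_degree, ← SimpleGraph.card_neighborFinset_eq_degree,
    hnbr, Finset.card_erase_of_mem ((SimpleGraph.mem_neighborFinset _ _ _).mpr hab.symm)]

lemma aux_insert_matching (G : SimpleGraph V) {a b : V} (M : Finset (Sym2 V))
    (hM : ∀ e ∈ M, ∀ f ∈ M, ∀ v : V, v ∈ e → v ∈ f → e = f)
    (hfree : ¬ ∃ f ∈ M, a ∈ f ∨ b ∈ f) :
    ∀ e ∈ insert s(a,b) M, ∀ f ∈ insert s(a,b) M, ∀ v : V, v ∈ e → v ∈ f → e = f := by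
  intro e he f hf v hv1 hv2
  rcases Finset.mem_insert.mp he with rfl | he <;> rcases Finset.mem_insert.mp hf with rfl | hf
  · rfl
  · exfalso
    refine hfree ⟨f, hf, ?_⟩
    rcases Sym2.mem_iff.mp hv1 with rfl | rfl
    · exact Or.inl hv2
    · exact Or.inr hv2
  · exfalso
    refine hfree ⟨e, he, ?_⟩
    rcases Sym2.mem_iff.mp hv2 with rfl | rfl
    · exact Or.inl hv1
    · exact Or.inr hv1
  · exact hM e he f hf v hv1 hv2

lemma aux_main : ∀ (n : ℕ) (G : SimpleGraph V) [inst : DecidableRel G.Adj],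
    G.edgeFinset.card ≤ n →
    (∀ v : V, G.degree v ≤ 3) →
    (∀ c : G.ConnectedComponent,
      (G.edgeFinset.filter fun e => ∀ v ∈ e, G.connectedComponentMk v = c).card ≤
        (Finset.univ.filter fun v : V => G.connectedComponentMk v = c).card) →
    ∃ M₁ M₂ M₃ : Finset (Sym2 V),
      Disjoint M₁ M₂ ∧ Disjoint M₁ M₃ ∧ Disjoint M₂ M₃ ∧
      M₁ ∪ M₂ ∪ M₃ = G.edgeFinset ∧
      (∀ e ∈ M₁, ∀ f ∈ M₁, ∀ v : V, v ∈ e → v ∈ f → e = f) ∧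
      (∀ e ∈ M₂, ∀ f ∈ M₂, ∀ v : V, v ∈ e → v ∈ f → e = f) ∧
      (∀ e ∈ M₃, ∀ f ∈ M₃, ∀ v : V, v ∈ e → v ∈ f → e = f) := by
  intro n
  induction n with
  | zero =>
    intro G inst hcard _ _
    have hE : G.edgeFinset = ∅ := Finset.card_eq_zero.mp (Nat.le_zero.mp hcard)
    exact ⟨∅, ∅, ∅, by simp, by simp, by simp, by simp [hE], by simp, by simp, by simp⟩
  | succ n ih =>
    intro G inst hcard hdeg hcomp
    rcases Finset.eq_empty_or_nonempty G.edgeFinset with hE | hne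
    · exact ⟨∅, ∅, ∅, by simp, by simp, by simp, by simp [hE], by simp, by simp, by simp⟩
    obtain ⟨a, b, hab, hP⟩ := aux_exists_good_edge G hcomp hne
    haveI inst' : DecidableRel (G.deleteEdges {s(a,b)}).Adj := Classical.decRel _
    have hE' := aux_edge_delete G a b
    have hmemE : s(a,b) ∈ G.edgeFinset := SimpleGraph.mem_edgeFinset.mpr hab
    have hcard' : (G.deleteEdges {s(a,b)}).edgeFinset.card ≤ n := by
      rw [hE', Finset.card_erase_of_mem hmemE]
      have := Finset.card_pos.mpr ⟨_, hmemE⟩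
      omega
    have hdeg' : ∀ v : V, (G.deleteEdges {s(a,b)}).degree v ≤ 3 :=
      fun v => (aux_deg_delete_le G a b v).trans (hdeg v)
    have hcomp' := aux_hcomp_delete G hab hP hcomp
    obtain ⟨M₁, M₂, M₃, h12, h13, h23, hU, hm1, hm2, hm3⟩ := ih _ hcard' hdeg' hcomp'
    have hda := aux_deg_delete_self G hab
    have hdb := aux_deg_delete_snd G hab
    have hsum : (G.deleteEdges {s(a,b)}).degree a + (G.deleteEdges {s(a,b)}).degree b ≤ 2 := by
      rcases hP with h1 | hreg
      · have := hdeg b; rw [hda, hdb, h1]; omega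
      · have h2a : G.degree a = 2 := hreg a rfl
        have h2b : G.degree b = 2 :=
          hreg b (SimpleGraph.ConnectedComponent.sound hab.symm.reachable)
        rw [hda, hdb, h2a, h2b]
    have hcardS : ((G.deleteEdges {s(a,b)}).edgeFinset.filter
        fun f => a ∈ f ∨ b ∈ f).card ≤ 2 := by
      have hsubS : ((G.deleteEdges {s(a,b)}).edgeFinset.filter fun f => a ∈ f ∨ b ∈ f) ⊆
          (G.deleteEdges {s(a,b)}).incidenceFinset a ∪
            (G.deleteEdges {s(a,b)}).incidenceFinset b := by
        intro f hf
        rw [Finset.mem_filter] at hf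
        rw [Finset.mem_union, SimpleGraph.incidenceFinset_eq_filter,
          SimpleGraph.incidenceFinset_eq_filter, Finset.mem_filter, Finset.mem_filter]
        tauto
      calc ((G.deleteEdges {s(a,b)}).edgeFinset.filter fun f => a ∈ f ∨ b ∈ f).card
          ≤ ((G.deleteEdges {s(a,b)}).incidenceFinset a ∪
              (G.deleteEdges {s(a,b)}).incidenceFinset b).card := Finset.card_le_card hsubS
        _ ≤ ((G.deleteEdges {s(a,b)}).incidenceFinset a).card +
              ((G.deleteEdges {s(a,b)}).incidenceFinset b).card := Finset.card_union_le _ _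
        _ = (G.deleteEdges {s(a,b)}).degree a + (G.deleteEdges {s(a,b)}).degree b := by
              rw [SimpleGraph.card_incidenceFinset_eq_degree,
                SimpleGraph.card_incidenceFinset_eq_degree]
        _ ≤ 2 := hsum
    have hsub1 : M₁ ⊆ (G.deleteEdges {s(a,b)}).edgeFinset := by
      rw [← hU]; exact Finset.subset_union_left.trans Finset.subset_union_left
    have hsub2 : M₂ ⊆ (G.deleteEdges {s(a,b)}).edgeFinset := by
      rw [← hU]; exact Finset.subset_union_right.trans Finset.subset_union_left
    have hsub3 : M₃ ⊆ (G.deleteEdges {s(a,b)}).edgeFinset := by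
      rw [← hU]; exact Finset.subset_union_right
    have hnotE : s(a,b) ∉ (G.deleteEdges {s(a,b)}).edgeFinset := by
      rw [hE']; simp
    have hchoice : (¬ ∃ f ∈ M₁, a ∈ f ∨ b ∈ f) ∨ (¬ ∃ f ∈ M₂, a ∈ f ∨ b ∈ f) ∨
        (¬ ∃ f ∈ M₃, a ∈ f ∨ b ∈ f) := by
      by_contra hcon
      push_neg at hcon
      obtain ⟨⟨f1, hf1M, hf1⟩, ⟨f2, hf2M, hf2⟩, ⟨f3, hf3M, hf3⟩⟩ := hcon
      have hne12 : f1 ≠ f2 := fun h => (Finset.disjoint_left.mp h12) hf1M (h ▸ hf2M)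
      have hne13 : f1 ≠ f3 := fun h => (Finset.disjoint_left.mp h13) hf1M (h ▸ hf3M)
      have hne23 : f2 ≠ f3 := fun h => (Finset.disjoint_left.mp h23) hf2M (h ▸ hf3M)
      have hsubf : ({f1, f2, f3} : Finset (Sym2 V)) ⊆
          ((G.deleteEdges {s(a,b)}).edgeFinset.filter fun f => a ∈ f ∨ b ∈ f) := by
        intro f hf
        rw [Finset.mem_filter]
        rcases Finset.mem_insert.mp hf with rfl | hf
        · exact ⟨hsub1 hf1M, hf1⟩
        rcases Finset.mem_insert.mp hf with rfl | hf
        · exact ⟨hsub2 hf2M, hf2⟩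
        rw [Finset.mem_singleton] at hf
        subst hf
        exact ⟨hsub3 hf3M, hf3⟩
      have hc3 : ({f1, f2, f3} : Finset (Sym2 V)).card = 3 := by
        rw [Finset.card_insert_of_notMem (by simp [hne12, hne13]),
          Finset.card_insert_of_notMem (by simp [hne23]), Finset.card_singleton]
      have := Finset.card_le_card hsubf
      omega
    rcases hchoice with hfree | hfree | hfree
    · refine ⟨insert s(a,b) M₁, M₂, M₃, ?_, ?_, h23, ?_,
        aux_insert_matching G M₁ hm1 hfree, hm2, hm3⟩
      · exact Finset.disjoint_insert_left.mpr ⟨fun hm => hnotE (hsub2 hm), h12⟩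
      · exact Finset.disjoint_insert_left.mpr ⟨fun hm => hnotE (hsub3 hm), h13⟩
      · rw [Finset.insert_union, Finset.insert_union, hU, hE', Finset.insert_erase hmemE]
    · refine ⟨M₁, insert s(a,b) M₂, M₃, ?_, h13, ?_,
        ?_, hm1, aux_insert_matching G M₂ hm2 hfree, hm3⟩
      · exact Finset.disjoint_insert_right.mpr ⟨fun hm => hnotE (hsub1 hm), h12⟩
      · exact Finset.disjoint_insert_left.mpr ⟨fun hm => hnotE (hsub3 hm), h23⟩
      · rw [Finset.union_insert, Finset.insert_union, hU, hE', Finset.insert_erase hmemE]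
    · refine ⟨M₁, M₂, insert s(a,b) M₃, h12, ?_, ?_,
        ?_, hm1, hm2, aux_insert_matching G M₃ hm3 hfree⟩
      · exact Finset.disjoint_insert_right.mpr ⟨fun hm => hnotE (hsub1 hm), h13⟩
      · exact Finset.disjoint_insert_right.mpr ⟨fun hm => hnotE (hsub2 hm), h23⟩
      · rw [Finset.union_insert, hU, hE', Finset.insert_erase hmemE]


end AuxThreeEdgeColouring

/-- Let `G` be a finite simple graph in which every vertex has degree at most 3 and
every connected component contains at most one cycle (equivalently, each connected
component has at most as many edges as vertices). Then the edge set of `G` can be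
partitioned into three matchings `M₁, M₂, M₃` (equivalently, `G` admits a proper
3-edge-colouring). -/
theorem max_degree_three_unicyclic_components_three_edge_colourable
    {V : Type*} [Fintype V] [DecidableEq V] (G : SimpleGraph V) [DecidableRel G.Adj]
    (hdeg : ∀ v : V, G.degree v ≤ 3)
    (hcomp : ∀ c : G.ConnectedComponent,
      (G.edgeFinset.filter fun e => ∀ v ∈ e, G.connectedComponentMk v = c).card ≤
        (Finset.univ.filter fun v : V => G.connectedComponentMk v = c).card) :
    ∃ M₁ M₂ M₃ : Finset (Sym2 V),
      Disjoint M₁ M₂ ∧ Disjoint M₁ M₃ ∧ Disjoint M₂ M₃ ∧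
      M₁ ∪ M₂ ∪ M₃ = G.edgeFinset ∧
      (∀ e ∈ M₁, ∀ f ∈ M₁, ∀ v : V, v ∈ e → v ∈ f → e = f) ∧
      (∀ e ∈ M₂, ∀ f ∈ M₂, ∀ v : V, v ∈ e → v ∈ f → e = f) ∧
      (∀ e ∈ M₃, ∀ f ∈ M₃, ∀ v : V, v ∈ e → v ∈ f → e = f) := by
  exact aux_main G.edgeFinset.card G le_rfl hdeg hcomp
end

section
/- Let G be a finite simple graph on agent set V with strict preferences given by rank functions r_i : V → ℕ that are injective on neighbourhoods (lower rank means more preferred). Let v₁, v₂, …, v_n be an enumeration of V such that for every t, if v_t has a G-neighbour in V_t = {v_{t+1}, …, v_n} then v_{t+1} is a G-neighbour of v_t and v_t strictly prefers v_{t+1} over every other G-neighbour of v_t in V_t. Let F be the set of edges {v_t, v_{t+1}} over all t such that v_t has a G-neighbour in V_t. Then for every matching M' in G and every agent v_i matched by M' to some v_j: if v_i strictly prefers v_j over every partner of v_i among the edges of F, then v_j strictly prefers some partner of v_j among the edges of F over v_i. Consequently, for every matching M', the number of agents that strictly prefer M' over the edge set F is at most the number of agents that strictly prefer F over M'. -/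
open scoped Classical

/-- The invariant of the greedy algorithm for the roommates problem with strict
preferences: given an enumeration `v 0, v 1, …, v (n-1)` of the agents such that
whenever `v t` has a neighbour among the later agents, `v (t+1)` is a neighbour of
`v t` strictly preferred by `v t` over every other later neighbour, and `F` is the
set of edges `{v t, v (t+1)}` over all such `t`: for every matching `M'` and every
agent `i` matched in `M'` to `j`, if `i` strictly prefers `j` over every `F`-partner
of `i` then `j` strictly prefers some `F`-partner of `j` over `i`. Consequently, for
every matching `M'`, the number of agents strictly preferring `M'` over `F` is at
most the number of agents strictly preferring `F` over `M'`. -/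
theorem roommates_greedy_sequence_invariant
    {V : Type*} [Fintype V] (G : SimpleGraph V) (r : V → V → ℕ)
    (hstrict : ∀ i j j', G.Adj i j → G.Adj i j' → r i j = r i j' → j = j')
    (n : ℕ) (hn : n = Fintype.card V)
    (v : ℕ → V) (henum : ∀ x : V, ∃! t, t < n ∧ v t = x)
    (hgreedy : ∀ t, t < n →
      (∃ u, G.Adj (v t) u ∧ ∃ s, t < s ∧ s < n ∧ v s = u) →
        G.Adj (v t) (v (t + 1)) ∧
        ∀ u, G.Adj (v t) u → (∃ s, t < s ∧ s < n ∧ v s = u) → u ≠ v (t + 1) →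
          r (v t) (v (t + 1)) < r (v t) u)
    (F : Finset (Sym2 V))
    (hF : ∀ e : Sym2 V, e ∈ F ↔ ∃ t, t < n ∧
      (∃ u, G.Adj (v t) u ∧ ∃ s, t < s ∧ s < n ∧ v s = u) ∧ e = s(v t, v (t + 1))) :
    (∀ M' : Finset (Sym2 V), RM.IsMatching G M' →
      ∀ i j : V, s(i, j) ∈ M' →
        (∀ u, s(i, u) ∈ F → r i j < r i u) →
        ∃ u, s(j, u) ∈ F ∧ r j u < r j i) ∧
    (∀ M' : Finset (Sym2 V), RM.IsMatching G M' →
      (Finset.univ.filter fun i => RM.Prefers r M' F i).card ≤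
        (Finset.univ.filter fun i => RM.Prefers r F M' i).card) := by
  classical
  have part1 : ∀ M' : Finset (Sym2 V), RM.IsMatching G M' →
      ∀ i j : V, s(i, j) ∈ M' →
        (∀ u, s(i, u) ∈ F → r i j < r i u) →
        ∃ u, s(j, u) ∈ F ∧ r j u < r j i := by
    intro M' hM' i j hij hpref
    have hadj : G.Adj i j := by
      have := hM'.1 _ hij
      simpa [SimpleGraph.mem_edgeSet] using this
    obtain ⟨p, ⟨hp, hvp⟩, hpu⟩ := henum i
    obtain ⟨q, ⟨hq, hvq⟩, hqu⟩ := henum j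
    have hpq : p ≠ q := by
      rintro rfl
      exact hadj.ne (hvp.symm.trans hvq)
    rcases lt_or_gt_of_ne hpq with hlt | hgt
    · -- p < q : contradiction
      exfalso
      have hex : ∃ u, G.Adj (v p) u ∧ ∃ s, p < s ∧ s < n ∧ v s = u :=
        ⟨j, hvp ▸ hadj, q, hlt, hq, hvq⟩
      obtain ⟨hadj', hbest⟩ := hgreedy p hp hex
      have hFe : s(v p, v (p + 1)) ∈ F := (hF _).2 ⟨p, hp, hex, rfl⟩
      have h1 : r i j < r i (v (p + 1)) := by
        apply hpref
        rw [hvp] at hFe; exact hFe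
      by_cases hj : j = v (p + 1)
      · rw [← hj] at h1; exact lt_irrefl _ h1
      · have h2 := hbest j (hvp ▸ hadj) ⟨q, hlt, hq, hvq⟩ hj
        rw [hvp] at h2
        exact lt_asymm h1 h2
    · -- q < p
      have hex : ∃ u, G.Adj (v q) u ∧ ∃ s, q < s ∧ s < n ∧ v s = u :=
        ⟨i, hvq ▸ hadj.symm, p, hgt, hp, hvp⟩
      obtain ⟨hadj', hbest⟩ := hgreedy q hq hex
      have hFe : s(v q, v (q + 1)) ∈ F := (hF _).2 ⟨q, hq, hex, rfl⟩
      rw [hvq] at hFe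
      by_cases hi : i = v (q + 1)
      · exfalso
        have hF2 : s(i, j) ∈ F := by rw [Sym2.eq_swap, hi]; exact hFe
        exact lt_irrefl _ (hpref j hF2)
      · have h2 := hbest i (hvq ▸ hadj.symm) ⟨p, hgt, hp, hvp⟩ hi
        rw [hvq] at h2
        exact ⟨v (q + 1), hFe, h2⟩
  refine ⟨part1, ?_⟩
  intro M' hM'
  set f : V → V := fun i => if h : ∃ j, s(i, j) ∈ M' then h.choose else i with hf
  have hfmem : ∀ i j, s(i, j) ∈ M' → f i = j := by
    intro i j hij
    have h : ∃ j, s(i, j) ∈ M' := ⟨j, hij⟩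
    simp only [hf, dif_pos h]
    exact hM'.2 i _ j h.choose_spec hij
  apply Finset.card_le_card_of_injOn f
  · intro i hi
    simp only [Finset.mem_coe, Finset.mem_filter, Finset.mem_univ, true_and] at hi ⊢
    obtain ⟨j, hj, hjpref⟩ := hi
    obtain ⟨u, huF, hu⟩ := part1 M' hM' i j hj hjpref
    rw [hfmem i j hj]
    refine ⟨u, huF, ?_⟩
    intro j' hj'
    have hji : j' = i := hM'.2 j j' i hj' (Sym2.eq_swap ▸ hj)
    rw [hji]; exact hu
  · intro i1 h1 i2 h2 heq
    simp only [Finset.coe_filter, Set.mem_setOf_eq, Finset.mem_univ, true_and] at h1 h2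
    obtain ⟨j1, hj1, -⟩ := h1
    obtain ⟨j2, hj2, -⟩ := h2
    rw [hfmem i1 j1 hj1, hfmem i2 j2 hj2] at heq
    subst heq
    exact hM'.2 j1 i1 i2 (Sym2.eq_swap ▸ hj1) (Sym2.eq_swap ▸ hj2)
end

section
/- Every roommates instance with unit weights and preference lists that may contain ties admits a Condorcet winning set of matchings of cardinality 3: there exist matchings M₁, M₂, M₃ such that no matching M' is strictly preferred over {M₁, M₂, M₃} by more than half of the agents. In particular, the Condorcet dimension of the roommates problem is at most 3. -/
open scoped Classical

namespace RMAux

variable {V : Type*}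

/-- `M` is a matching of `G` whose edges have all endpoints in `S`. -/
def Good (G : SimpleGraph V) (S : Finset V) (M : Finset (Sym2 V)) : Prop :=
  (∀ e ∈ M, e ∈ G.edgeSet) ∧ (∀ i j : V, s(i, j) ∈ M → i ∈ S) ∧
  (∀ i j j' : V, s(i, j) ∈ M → s(i, j') ∈ M → j = j')

/-- Agent `i` is matched in one of the three matchings at least as well as `j`. -/
def Covered (r : V → V → ℕ) (M₁ M₂ M₃ : Finset (Sym2 V)) (i j : V) : Prop :=
  ∃ q, (s(i, q) ∈ M₁ ∨ s(i, q) ∈ M₂ ∨ s(i, q) ∈ M₃) ∧ r i q ≤ r i j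

lemma key [Finite V] (G : SimpleGraph V) (r : V → V → ℕ) (S : Finset V) :
    ∃ M₁ M₂ M₃ : Finset (Sym2 V),
      Good G S M₁ ∧ Good G S M₂ ∧ Good G S M₃ ∧
      ∀ i j : V, i ∈ S → j ∈ S → G.Adj i j →
        Covered r M₁ M₂ M₃ i j ∨ Covered r M₁ M₂ M₃ j i := by
  induction S using Finset.strongInduction with
  | _ S ih =>
  by_cases hdeg : ∃ i ∈ S, ∃ j ∈ S, G.Adj i j
  swap
  · refine ⟨∅, ∅, ∅, ?_, ?_, ?_, ?_⟩ <;>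
      first
        | exact ⟨fun e he => absurd he (Finset.notMem_empty e),
            fun i j hij => absurd hij (Finset.notMem_empty _),
            fun i j j' hij hij' => absurd hij (Finset.notMem_empty _)⟩
        | exact fun i j hi hj hadj => absurd ⟨i, hi, j, hj, hadj⟩ hdeg
  -- the greedy "best available partner" map
  · have hex : ∀ v : V, (∃ u ∈ S, G.Adj v u) →
        ∃ u, u ∈ S ∧ G.Adj v u ∧ ∀ w ∈ S, G.Adj v w → r v u ≤ r v w := by
      intro v hv
      obtain ⟨u, hu, hadj⟩ := hv
      obtain ⟨m, hm, hmin⟩ := Finset.exists_min_image (S.filter (fun w => G.Adj v w)) (r v)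
        ⟨u, Finset.mem_filter.2 ⟨hu, hadj⟩⟩
      exact ⟨m, (Finset.mem_filter.1 hm).1, (Finset.mem_filter.1 hm).2,
        fun w hw hadj' => hmin w (Finset.mem_filter.2 ⟨hw, hadj'⟩)⟩
    choose g hg1 hg2 hg3 using hex
    obtain ⟨f, hfS, hfAdj, hfMin⟩ :
        ∃ f : V → V, (∀ v : V, (∃ u ∈ S, G.Adj v u) → f v ∈ S) ∧
          (∀ v : V, (∃ u ∈ S, G.Adj v u) → G.Adj v (f v)) ∧
          (∀ v : V, (∃ u ∈ S, G.Adj v u) → ∀ w ∈ S, G.Adj v w → r v (f v) ≤ r v w) := by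
      refine ⟨fun v => if h : ∃ u ∈ S, G.Adj v u then g v h else v, ?_, ?_, ?_⟩ <;>
        · intro v hv
          simp only [dif_pos hv]
          first
            | exact hg1 v hv
            | exact hg2 v hv
            | exact hg3 v hv
    -- NI : has a neighbour in S
    set NI : V → Prop := fun v => v ∈ S ∧ ∃ u ∈ S, G.Adj v u with hNIdef
    have hNIf : ∀ v, NI v → NI (f v) :=
      fun v hv => ⟨hfS v hv.2, v, hv.1, (hfAdj v hv.2).symm⟩
    obtain ⟨v₀, hv₀S, u₀, hu₀S, hadj₀⟩ := hdeg
    have hv₀ : NI v₀ := ⟨hv₀S, u₀, hu₀S, hadj₀⟩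
    have hit : ∀ n, NI (f^[n] v₀) := by
      intro n; induction n with
      | zero => exact hv₀
      | succ n ihn => rw [Function.iterate_succ_apply']; exact hNIf _ ihn
    -- find a periodic point
    obtain ⟨a, b, hab, heq⟩ := Finite.exists_ne_map_eq_of_infinite (fun n => f^[n] v₀)
    wlog hab' : a < b generalizing a b
    · exact this b a hab.symm heq.symm (by omega)
    set c : V := f^[a] v₀ with hcdef
    have hc : NI c := hit a
    have hcyc : f^[b - a] c = c := by
      have : f^[b - a + a] v₀ = f^[b - a] (f^[a] v₀) := Function.iterate_add_apply f (b - a) a v₀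
      rw [show b - a + a = b by omega] at this
      rw [hcdef, ← this, ← heq]
    obtain ⟨p, hp_pos, hpp, hpmin⟩ :
        ∃ p, 0 < p ∧ f^[p] c = c ∧ ∀ n, 0 < n → f^[n] c = c → p ≤ n := by
      have hP : ∃ n, 0 < n ∧ f^[n] c = c := ⟨b - a, by omega, hcyc⟩
      exact ⟨Nat.find hP, (Nat.find_spec hP).1, (Nat.find_spec hP).2,
        fun n h1 h2 => Nat.find_min' hP ⟨h1, h2⟩⟩
    have hvsNI : ∀ t, NI (f^[t] c) := by
      intro t
      rw [hcdef, ← Function.iterate_add_apply]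
      exact hit (t + a)
    have hp2 : 2 ≤ p := by
      have h1 : p ≠ 1 := by
        intro h
        have hfc : f c = c := by
          have h2 := hpp
          rw [h] at h2
          simpa using h2
        exact G.ne_of_adj (hfAdj c hc.2) (by rw [hfc])
      omega
    -- injectivity of the orbit
    have hinj : ∀ t s, t < p → s < p → f^[t] c = f^[s] c → t = s := by
      have aux : ∀ t s, t < s → s < p → f^[t] c = f^[s] c → False := by
        intro t s hts hsp he
        have h1 : f^[p - s + t] c = c := by
          rw [Function.iterate_add_apply, he, ← Function.iterate_add_apply,
            show p - s + s = p by omega]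
          exact hpp
        have := hpmin (p - s + t) (by omega) h1
        omega
      intro t s ht hs he
      rcases Nat.lt_trichotomy t s with h | h | h
      · exact absurd (aux t s h hs he) not_false
      · exact h
      · exact absurd (aux s t h ht he.symm) not_false
    -- the cycle edges
    obtain ⟨e, hedef⟩ : ∃ e : ℕ → Sym2 V, ∀ t, e t = s(f^[t] c, f^[(t + 1) % p] c) :=
      ⟨fun t => s(f^[t] c, f^[(t + 1) % p] c), fun _ => rfl⟩
    have hnxt : ∀ t, t < p → f (f^[t] c) = f^[(t + 1) % p] c := by
      intro t ht
      rcases Nat.lt_or_ge (t + 1) p with h | h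
      · rw [Nat.mod_eq_of_lt h]
        exact (Function.iterate_succ_apply' f t c).symm
      · have hteq : t + 1 = p := by omega
        rw [hteq, Nat.mod_self]
        have h3 : f^[p] c = f (f^[p - 1] c) := by
          conv_lhs => rw [show p = p - 1 + 1 by omega]
          exact Function.iterate_succ_apply' f (p - 1) c
        rw [show (t : ℕ) = p - 1 by omega, ← h3, hpp]
        simp
    have hmodlt : ∀ t, (t + 1) % p < p := fun t => Nat.mod_lt _ hp_pos
    have hnxt_ne : ∀ t, t < p → (t + 1) % p ≠ t := by
      intro t ht h
      rcases Nat.lt_or_ge (t + 1) p with h2 | h2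
      · rw [Nat.mod_eq_of_lt h2] at h; omega
      · have : t + 1 = p := by omega
        rw [this, Nat.mod_self] at h; omega
    -- endpoints of cycle edges
    have hV : ∀ t x y, t < p → e t = s(x, y) →
        (x = f^[t] c ∧ y = f^[(t + 1) % p] c) ∨ (x = f^[(t + 1) % p] c ∧ y = f^[t] c) := by
      intro t x y ht he
      rw [hedef t] at he
      rw [Sym2.eq_iff] at he
      tauto
    have hend : ∀ t i j j', e t = s(i, j) → e t = s(i, j') → j = j' := by
      intro t i j j' h1 h2
      have : s(i, j) = s(i, j') := by rw [← h1, ← h2]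
      exact Sym2.congr_right.1 this
    -- index recovery from a shared endpoint
    have hidx : ∀ t s i j j', t < p → s < p → e t = s(i, j) → e s = s(i, j') →
        t = s ∨ t = (s + 1) % p ∨ (t + 1) % p = s ∨ (t + 1) % p = (s + 1) % p := by
      intro t s i j j' ht hs h1 h2
      rcases hV t i j ht h1 with ⟨hx, _⟩ | ⟨hx, _⟩ <;>
        rcases hV s i j' hs h2 with ⟨hy, _⟩ | ⟨hy, _⟩
      · exact Or.inl (hinj t s ht hs (by rw [← hx, ← hy]))
      · exact Or.inr (Or.inl (hinj t _ ht (hmodlt s) (by rw [← hx, ← hy])))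
      · exact Or.inr (Or.inr (Or.inl (hinj _ s (hmodlt t) hs (by rw [← hx, ← hy]))))
      · exact Or.inr (Or.inr (Or.inr (hinj _ _ (hmodlt t) (hmodlt s) (by rw [← hx, ← hy]))))
    -- the three cycle matchings
    set Ma : Finset (Sym2 V) := ((Finset.range (p - 1)).filter (fun t => t % 2 = 0)).image e
      with hMadef
    set Mb : Finset (Sym2 V) := ((Finset.range (p - 1)).filter (fun t => t % 2 = 1)).image e
      with hMbdef
    set Mc : Finset (Sym2 V) := {e (p - 1)} with hMcdef
    have hMaMem : ∀ x ∈ Ma, ∃ t, t < p - 1 ∧ t % 2 = 0 ∧ e t = x := by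
      intro x hx
      rw [hMadef] at hx
      obtain ⟨t, ht, hte⟩ := Finset.mem_image.1 hx
      rw [Finset.mem_filter, Finset.mem_range] at ht
      exact ⟨t, ht.1, ht.2, hte⟩
    have hMbMem : ∀ x ∈ Mb, ∃ t, t < p - 1 ∧ t % 2 = 1 ∧ e t = x := by
      intro x hx
      rw [hMbdef] at hx
      obtain ⟨t, ht, hte⟩ := Finset.mem_image.1 hx
      rw [Finset.mem_filter, Finset.mem_range] at ht
      exact ⟨t, ht.1, ht.2, hte⟩
    have hMcMem : ∀ x ∈ Mc, ∃ t, t = p - 1 ∧ e t = x := by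
      intro x hx
      rw [hMcdef, Finset.mem_singleton] at hx
      exact ⟨p - 1, rfl, hx.symm⟩
    -- the set of cycle vertices
    set C : Finset V := (Finset.range p).image (fun t => f^[t] c) with hCdef
    have hCS : ∀ x ∈ C, x ∈ S := by
      intro x hx
      obtain ⟨t, _, ht⟩ := Finset.mem_image.1 hx
      rw [← ht]; exact (hvsNI t).1
    have hCmem : ∀ t, t < p → f^[t] c ∈ C := by
      intro t ht
      exact Finset.mem_image.2 ⟨t, Finset.mem_range.2 ht, rfl⟩
    have heC : ∀ t i j, t < p → e t = s(i, j) → i ∈ C := by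
      intro t i j ht he
      rcases hV t i j ht he with ⟨hx, _⟩ | ⟨hx, _⟩
      · rw [hx]; exact hCmem t ht
      · rw [hx]; exact hCmem _ (hmodlt t)
    -- recursion on S \ C
    have hcC : c ∈ C := by
      have := hCmem 0 hp_pos
      simpa using this
    have hssub : S \ C ⊂ S := by
      refine Finset.ssubset_iff_of_subset (Finset.sdiff_subset) |>.2 ⟨c, hc.1, ?_⟩
      simp [hcC]
    obtain ⟨N₁, N₂, N₃, hN₁, hN₂, hN₃, hNdom⟩ := ih (S \ C) hssub
    -- membership of cycle edges with a uniform bound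
    have hMaMem' : ∀ x ∈ Ma, ∃ t, t < p ∧ e t = x := by
      intro x hx
      obtain ⟨t, ht, _, hte⟩ := hMaMem x hx
      exact ⟨t, by omega, hte⟩
    have hMbMem' : ∀ x ∈ Mb, ∃ t, t < p ∧ e t = x := by
      intro x hx
      obtain ⟨t, ht, _, hte⟩ := hMbMem x hx
      exact ⟨t, by omega, hte⟩
    have hMcMem' : ∀ x ∈ Mc, ∃ t, t < p ∧ e t = x := by
      intro x hx
      obtain ⟨t, ht, hte⟩ := hMcMem x hx
      exact ⟨t, by omega, hte⟩
    -- matching property of each cycle part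
    have hMaMatch : ∀ i j j' : V, s(i, j) ∈ Ma → s(i, j') ∈ Ma → j = j' := by
      intro i j j' h1 h2
      obtain ⟨t, ht, hpar, hte⟩ := hMaMem _ h1
      obtain ⟨u, hu, hpar', hue⟩ := hMaMem _ h2
      have htp : t < p := by omega
      have hup : u < p := by omega
      have hc4 := hidx t u i j j' htp hup hte hue
      have htu : t = u := by
        rcases hc4 with h | h | h | h
        · exact h
        · rw [Nat.mod_eq_of_lt (by omega : u + 1 < p)] at h; omega
        · rw [Nat.mod_eq_of_lt (by omega : t + 1 < p)] at h; omega
        · rw [Nat.mod_eq_of_lt (by omega : t + 1 < p),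
            Nat.mod_eq_of_lt (by omega : u + 1 < p)] at h; omega
      subst htu
      exact hend t i j j' hte hue
    have hMbMatch : ∀ i j j' : V, s(i, j) ∈ Mb → s(i, j') ∈ Mb → j = j' := by
      intro i j j' h1 h2
      obtain ⟨t, ht, hpar, hte⟩ := hMbMem _ h1
      obtain ⟨u, hu, hpar', hue⟩ := hMbMem _ h2
      have htp : t < p := by omega
      have hup : u < p := by omega
      have hc4 := hidx t u i j j' htp hup hte hue
      have htu : t = u := by
        rcases hc4 with h | h | h | h
        · exact h
        · rw [Nat.mod_eq_of_lt (by omega : u + 1 < p)] at h; omega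
        · rw [Nat.mod_eq_of_lt (by omega : t + 1 < p)] at h; omega
        · rw [Nat.mod_eq_of_lt (by omega : t + 1 < p),
            Nat.mod_eq_of_lt (by omega : u + 1 < p)] at h; omega
      subst htu
      exact hend t i j j' hte hue
    have hMcMatch : ∀ i j j' : V, s(i, j) ∈ Mc → s(i, j') ∈ Mc → j = j' := by
      intro i j j' h1 h2
      obtain ⟨t, ht, hte⟩ := hMcMem _ h1
      obtain ⟨u, hu, hue⟩ := hMcMem _ h2
      subst ht; subst hu
      exact hend (p - 1) i j j' hte hue
    -- goodness of the unions
    have hGoodUnion : ∀ (Mx N : Finset (Sym2 V)),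
        (∀ x ∈ Mx, ∃ t, t < p ∧ e t = x) →
        (∀ i j j' : V, s(i, j) ∈ Mx → s(i, j') ∈ Mx → j = j') →
        Good G (S \ C) N → Good G S (Mx ∪ N) := by
      intro Mx N hmem hmatch hN
      refine ⟨?_, ?_, ?_⟩
      · intro x hx
        rcases Finset.mem_union.1 hx with hx | hx
        · obtain ⟨t, ht, hte⟩ := hmem x hx
          have hNIt := hvsNI t
          have hadj : G.Adj (f^[t] c) (f (f^[t] c)) := hfAdj _ hNIt.2
          rw [← hte, hedef t, ← hnxt t ht]
          exact (SimpleGraph.mem_edgeSet G).2 hadj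
        · exact hN.1 x hx
      · intro i j hij
        rcases Finset.mem_union.1 hij with hx | hx
        · obtain ⟨t, ht, hte⟩ := hmem _ hx
          exact hCS i (heC t i j ht hte)
        · exact Finset.mem_sdiff.1 (hN.2.1 i j hx) |>.1
      · intro i j j' h1 h2
        rcases Finset.mem_union.1 h1 with hx1 | hx1 <;> rcases Finset.mem_union.1 h2 with hx2 | hx2
        · exact hmatch i j j' hx1 hx2
        · exfalso
          obtain ⟨t, ht, hte⟩ := hmem _ hx1
          have hiC : i ∈ C := heC t i j ht hte
          have hiS' : i ∈ S \ C := hN.2.1 i j' hx2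
          exact (Finset.mem_sdiff.1 hiS').2 hiC
        · exfalso
          obtain ⟨t, ht, hte⟩ := hmem _ hx2
          have hiC : i ∈ C := heC t i j' ht hte
          have hiS' : i ∈ S \ C := hN.2.1 i j hx1
          exact (Finset.mem_sdiff.1 hiS').2 hiC
        · exact hN.2.2 i j j' hx1 hx2
    refine ⟨Ma ∪ N₁, Mb ∪ N₂, Mc ∪ N₃,
      hGoodUnion Ma N₁ hMaMem' hMaMatch hN₁,
      hGoodUnion Mb N₂ hMbMem' hMbMatch hN₂,
      hGoodUnion Mc N₃ hMcMem' hMcMatch hN₃, ?_⟩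
    -- domination
    have hCcov : ∀ i j : V, i ∈ C → j ∈ S → G.Adj i j →
        Covered r (Ma ∪ N₁) (Mb ∪ N₂) (Mc ∪ N₃) i j := by
      intro i j hiC hj hadj
      obtain ⟨t, htr, hti⟩ := Finset.mem_image.1 hiC
      rw [Finset.mem_range] at htr
      have hnb : ∃ u ∈ S, G.Adj i u := ⟨j, hj, hadj⟩
      refine ⟨f i, ?_, hfMin i hnb j hj hadj⟩
      have hei : e t = s(i, f i) := by
        rw [hedef t, ← hnxt t htr, hti]
      rcases Nat.lt_or_ge t (p - 1) with hlt | hge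
      · rcases Nat.even_or_odd t with hev | hod
        · refine Or.inl (Finset.mem_union_left _ ?_)
          rw [hMadef]
          exact Finset.mem_image.2 ⟨t, Finset.mem_filter.2
            ⟨Finset.mem_range.2 hlt, Nat.even_iff.1 hev⟩, hei⟩
        · refine Or.inr (Or.inl (Finset.mem_union_left _ ?_))
          rw [hMbdef]
          exact Finset.mem_image.2 ⟨t, Finset.mem_filter.2
            ⟨Finset.mem_range.2 hlt, Nat.odd_iff.1 hod⟩, hei⟩
      · refine Or.inr (Or.inr (Finset.mem_union_left _ ?_))
        rw [hMcdef, Finset.mem_singleton, ← hei, show t = p - 1 by omega]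
    have hCovMono : ∀ i j : V, Covered r N₁ N₂ N₃ i j →
        Covered r (Ma ∪ N₁) (Mb ∪ N₂) (Mc ∪ N₃) i j := by
      rintro i j ⟨q, hq, hr⟩
      refine ⟨q, ?_, hr⟩
      rcases hq with h | h | h
      · exact Or.inl (Finset.mem_union_right _ h)
      · exact Or.inr (Or.inl (Finset.mem_union_right _ h))
      · exact Or.inr (Or.inr (Finset.mem_union_right _ h))
    intro i j hi hj hadj
    by_cases hiC : i ∈ C
    · exact Or.inl (hCcov i j hiC hj hadj)
    · by_cases hjC : j ∈ C
      · exact Or.inr (hCcov j i hjC hi hadj.symm)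
      · have hi' : i ∈ S \ C := Finset.mem_sdiff.2 ⟨hi, hiC⟩
        have hj' : j ∈ S \ C := Finset.mem_sdiff.2 ⟨hj, hjC⟩
        rcases hNdom i j hi' hj' hadj with h | h
        · exact Or.inl (hCovMono i j h)
        · exact Or.inr (hCovMono j i h)

end RMAux

/-- Every roommates instance with unit weights and preference lists that may contain
ties admits a Condorcet winning set of matchings of cardinality 3: there exist
matchings `M₁, M₂, M₃` such that no matching `M'` is strictly preferred over
`{M₁, M₂, M₃}` by more than half of the agents. In particular, the Condorcet
dimension of the roommates problem is at most 3. -/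
theorem roommates_condorcet_dimension_le_three
    {V : Type*} [Fintype V] (G : SimpleGraph V) (r : V → V → ℕ) :
    ∃ M₁ M₂ M₃ : Finset (Sym2 V),
      RM.IsMatching G M₁ ∧ RM.IsMatching G M₂ ∧ RM.IsMatching G M₃ ∧
      ∀ M' : Finset (Sym2 V), RM.IsMatching G M' →
        2 * (Finset.univ.filter fun i =>
            ∀ M ∈ ({M₁, M₂, M₃} : Set (Finset (Sym2 V))), RM.Prefers r M' M i).card ≤
          Fintype.card V := by
  classical
  obtain ⟨M₁, M₂, M₃, h₁, h₂, h₃, hdom⟩ := RMAux.key G r Finset.univ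
  refine ⟨M₁, M₂, M₃, ⟨h₁.1, h₁.2.2⟩, ⟨h₂.1, h₂.2.2⟩, ⟨h₃.1, h₃.2.2⟩, ?_⟩
  intro M' hM'
  set T : Finset V := Finset.univ.filter (fun i =>
    ∀ M ∈ ({M₁, M₂, M₃} : Set (Finset (Sym2 V))), RM.Prefers r M' M i) with hTdef
  have hT : ∀ i ∈ T, ∀ M ∈ ({M₁, M₂, M₃} : Set (Finset (Sym2 V))), RM.Prefers r M' M i :=
    fun i hi => (Finset.mem_filter.1 hi).2
  have hptex : ∀ i ∈ T, ∃ j, s(i, j) ∈ M' := by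
    intro i hi
    obtain ⟨j, hj, _⟩ := hT i hi M₁ (by simp)
    exact ⟨j, hj⟩
  obtain ⟨pt, hptM⟩ : ∃ pt : V → V, ∀ i ∈ T, s(i, pt i) ∈ M' := by
    refine ⟨fun i => if h : ∃ j, s(i, j) ∈ M' then h.choose else i, ?_⟩
    intro i hi
    have h := hptex i hi
    simp only [dif_pos h]
    exact h.choose_spec
  have hbT : ∀ i ∈ T, ∀ q : V, (s(i, q) ∈ M₁ ∨ s(i, q) ∈ M₂ ∨ s(i, q) ∈ M₃) →
      r i (pt i) < r i q := by
    intro i hi q hq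
    rcases hq with h | h | h
    · obtain ⟨j, hj, hbet⟩ := hT i hi M₁ (by simp)
      have hje : j = pt i := hM'.2 i j (pt i) hj (hptM i hi)
      rw [← hje]; exact hbet q h
    · obtain ⟨j, hj, hbet⟩ := hT i hi M₂ (by simp)
      have hje : j = pt i := hM'.2 i j (pt i) hj (hptM i hi)
      rw [← hje]; exact hbet q h
    · obtain ⟨j, hj, hbet⟩ := hT i hi M₃ (by simp)
      have hje : j = pt i := hM'.2 i j (pt i) hj (hptM i hi)
      rw [← hje]; exact hbet q h
  have hnot : ∀ i ∈ T, pt i ∉ T := by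
    intro i hi hcontra
    have hedge : s(i, pt i) ∈ G.edgeSet := hM'.1 _ (hptM i hi)
    have hadj : G.Adj i (pt i) := (SimpleGraph.mem_edgeSet G).1 hedge
    rcases hdom i (pt i) (Finset.mem_univ i) (Finset.mem_univ (pt i)) hadj with
      ⟨q, hq, hrle⟩ | ⟨q, hq, hrle⟩
    · have := hbT i hi q hq
      omega
    · have h1 : s(pt i, i) ∈ M' := by rw [← Sym2.eq_swap]; exact hptM i hi
      have h2 : s(pt i, pt (pt i)) ∈ M' := hptM (pt i) hcontra
      have he : pt (pt i) = i := hM'.2 (pt i) _ i h2 h1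
      have := hbT (pt i) hcontra q hq
      rw [he] at this
      omega
  have hinjT : Set.InjOn pt ↑T := by
    intro x hx y hy hxy
    have h1 : s(pt x, x) ∈ M' := by rw [← Sym2.eq_swap]; exact hptM x hx
    have h2 : s(pt y, y) ∈ M' := by rw [← Sym2.eq_swap]; exact hptM y hy
    rw [hxy] at h1
    exact hM'.2 (pt y) x y h1 h2
  have hmaps : ∀ a ∈ T, pt a ∈ Finset.univ \ T :=
    fun a ha => Finset.mem_sdiff.2 ⟨Finset.mem_univ _, hnot a ha⟩
  have hcard : T.card ≤ (Finset.univ \ T).card :=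
    Finset.card_le_card_of_injOn pt hmaps hinjT
  have hsd : (Finset.univ \ T).card = Fintype.card V - T.card := by
    rw [Finset.card_sdiff_of_subset (Finset.subset_univ T), Finset.card_univ]
  have hle : T.card ≤ Fintype.card V := by
    rw [← Finset.card_univ]; exact Finset.card_le_card (Finset.subset_univ T)
  omega
end
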